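/- arXiv:1306.4285 — 12 statements merged into one kernel-verified Lean document; each statement's English description precedes it below -/
import Mathlib

section
/- Let (V,φ) be a finite-dimensional bilinear space and U, W subspaces with V = U ⊥ W (i.e. V = U ⊕ W, φ(U,W) = 0 = φ(W,U)). Then for every k ≥ 1, L^k_V(V) = L^k_U(U) ⊕ L^k_W(W) and R^k_V(V) = R^k_U(U) ⊕ R^k_W(W), where the operators L, R on each space assign to a subspace its left (resp. right) orthogonal complement with respect to the restricted form. -/
variable {F V : Type*} [Field F] [AddCommGroup V] [Module F V]

/-- Left orthogonal complement of a subspace with respect to a bilinear form. -/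
def Lc (φ : V →ₗ[F] V →ₗ[F] F) (U : Submodule F V) : Submodule F V where
  carrier := {v | ∀ u ∈ U, φ v u = 0}
  add_mem' := by
    intro a b ha hb u hu
    simp [map_add, ha u hu, hb u hu]
  zero_mem' := by intro u hu; simp
  smul_mem' := by
    intro c a ha u hu
    simp [ha u hu]

/-- Right orthogonal complement of a subspace with respect to a bilinear form. -/
def Rc (φ : V →ₗ[F] V →ₗ[F] F) (U : Submodule F V) : Submodule F V where
  carrier := {v | ∀ u ∈ U, φ u v = 0}
  add_mem' := by
    intro a b ha hb u hu
    simp [map_add, ha u hu, hb u hu]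
  zero_mem' := by intro u hu; simp
  smul_mem' := by
    intro c a ha u hu
    simp [ha u hu]

/-- The odd alternating iterates `L^{2k+1}(V) = L(R(L(...(V))))`. -/
def Lodd (φ : V →ₗ[F] V →ₗ[F] F) : ℕ → Submodule F V
  | 0 => Lc φ ⊤
  | k + 1 => Lc φ (Rc φ (Lodd φ k))

/-- The odd alternating iterates `R^{2k+1}(V) = R(L(R(...(V))))`. -/
def Rodd (φ : V →ₗ[F] V →ₗ[F] F) : ℕ → Submodule F V
  | 0 => Rc φ ⊤
  | k + 1 => Rc φ (Lc φ (Rodd φ k))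

/-- `V_∞ = L_∞(V) + R_∞(V)`. -/
def Vinf (φ : V →ₗ[F] V →ₗ[F] F) : Submodule F V :=
  (⨆ k, Lodd φ k) ⊔ (⨆ k, Rodd φ k)

/-- `g` is an isometry of the bilinear space `(V, φ)`. -/
def IsIsom (φ : V →ₗ[F] V →ₗ[F] F) (g : V ≃ₗ[F] V) : Prop :=
  ∀ v w : V, φ (g v) (g w) = φ v w

/-!
As `U ⊥ W`, the left complement of a subspace of `U` contains `W` and that of a subspace of `W`
contains `U`. Since `U ⊔ W = V`, the modular law then splits the left complement of `A ⊕ B`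
(`A ≤ U`, `B ≤ W`) as the left complement of `A` in `U` plus that of `B` in `W`. So `L` commutes
with the decomposition, hence so do its iterates; `R` is `L` for the flipped form.
-/

theorem inf_eq_inf_sup_inf_of_codisjoint {α : Type*} [Lattice α] [BoundedOrder α]
    [IsModularLattice α] {a b x y : α} (hab : Codisjoint a b) (hbx : b ≤ x) (hay : a ≤ y) :
    x ⊓ y = x ⊓ a ⊔ b ⊓ y := by
  calc x ⊓ y = x ⊓ (a ⊔ b) ⊓ y := by rw [hab.eq_top, inf_top_eq]
    _ = (x ⊓ a ⊔ b) ⊓ y := by rw [inf_sup_assoc_of_le a hbx]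
    _ = x ⊓ a ⊔ b ⊓ y := sup_inf_assoc_of_le b (inf_le_right.trans hay)

theorem LinearMap.flip_compl₁₂ {R M N P Q Q' : Type*} [CommSemiring R] [AddCommMonoid M]
    [AddCommMonoid N] [AddCommMonoid P] [AddCommMonoid Q] [AddCommMonoid Q'] [Module R M]
    [Module R N] [Module R P] [Module R Q] [Module R Q'] (f : M →ₗ[R] N →ₗ[R] P)
    (g : Q →ₗ[R] M) (g' : Q' →ₗ[R] N) :
    (f.compl₁₂ g g').flip = f.flip.compl₁₂ g' g :=
  rfl

section

variable (φ : V →ₗ[F] V →ₗ[F] F)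

theorem Rc_eq_Lc_flip : Rc φ = Lc φ.flip :=
  rfl

theorem Lc_sup (S T : Submodule F V) : Lc φ (S ⊔ T) = Lc φ S ⊓ Lc φ T := by
  ext v
  constructor
  · intro hv
    exact ⟨fun s hs => hv s (Submodule.mem_sup_left hs),
      fun t ht => hv t (Submodule.mem_sup_right ht)⟩
  · rintro ⟨hS, hT⟩ x hx
    obtain ⟨s, hs, t, ht, rfl⟩ := Submodule.mem_sup.1 hx
    rw [map_add, hS s hs, hT t ht, add_zero]

theorem map_subtype_Lc_compl₁₂ (U : Submodule F V) (A : Submodule F U) :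
    (Lc (φ.compl₁₂ U.subtype U.subtype) A).map U.subtype = U ⊓ Lc φ (A.map U.subtype) := by
  ext v
  constructor
  · rintro ⟨a, ha, rfl⟩
    exact ⟨a.2, by rintro _ ⟨b, hb, rfl⟩; exact ha b hb⟩
  · rintro ⟨hvU, hv⟩
    exact ⟨⟨v, hvU⟩, fun b hb => hv _ ⟨b, hb, rfl⟩, rfl⟩

theorem le_Lc_of_le {S U W : Submodule F V} (horth : ∀ u ∈ U, ∀ w ∈ W, φ w u = 0)
    (hS : S ≤ U) : W ≤ Lc φ S :=
  fun w hw u hu => horth u (hS hu) w hw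

variable {U W : Submodule F V} (hUW : Codisjoint U W)
  (horth : ∀ u ∈ U, ∀ w ∈ W, φ u w = 0 ∧ φ w u = 0)
include hUW horth

theorem Lc_sup_map_subtype (A : Submodule F U) (B : Submodule F W) :
    Lc φ (A.map U.subtype ⊔ B.map W.subtype) =
      (Lc (φ.compl₁₂ U.subtype U.subtype) A).map U.subtype ⊔
        (Lc (φ.compl₁₂ W.subtype W.subtype) B).map W.subtype := by
  rw [Lc_sup, map_subtype_Lc_compl₁₂, map_subtype_Lc_compl₁₂, inf_comm U]
  exact inf_eq_inf_sup_inf_of_codisjoint hUW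
    (le_Lc_of_le φ (fun u hu w hw => (horth u hu w hw).2) (Submodule.map_subtype_le U A))
    (le_Lc_of_le φ (fun w hw u hu => (horth u hu w hw).1) (Submodule.map_subtype_le W B))

theorem iterate_Lc_top (k : ℕ) :
    (Lc φ)^[k] ⊤ =
      ((Lc (φ.compl₁₂ U.subtype U.subtype))^[k] ⊤).map U.subtype ⊔
        ((Lc (φ.compl₁₂ W.subtype W.subtype))^[k] ⊤).map W.subtype := by
  set embed := fun p : Submodule F U × Submodule F W => p.1.map U.subtype ⊔ p.2.map W.subtype
  have hsemiconj : Function.Semiconj embed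
      (Prod.map (Lc (φ.compl₁₂ U.subtype U.subtype)) (Lc (φ.compl₁₂ W.subtype W.subtype)))
      (Lc φ) :=
    fun p => (Lc_sup_map_subtype φ hUW horth p.1 p.2).symm
  have htop : embed (⊤, ⊤) = ⊤ := by
    simp only [embed, Submodule.map_top, Submodule.range_subtype, hUW.eq_top]
  rw [← htop, ← hsemiconj.iterate_right k, Prod.map_iterate]
  rfl

end

theorem iterated_orthogonal_of_orthogonal_direct_sum
    (φ : V →ₗ[F] V →ₗ[F] F) (U W : Submodule F V)
    (hcompl : IsCompl U W)
    (horth : ∀ u ∈ U, ∀ w ∈ W, φ u w = 0 ∧ φ w u = 0) :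
    ∀ k : ℕ, 1 ≤ k →
      ((Lc φ)^[k] ⊤ =
          (((Lc (φ.compl₁₂ U.subtype U.subtype))^[k] ⊤).map U.subtype) ⊔
          (((Lc (φ.compl₁₂ W.subtype W.subtype))^[k] ⊤).map W.subtype) ∧
        Disjoint (((Lc (φ.compl₁₂ U.subtype U.subtype))^[k] ⊤).map U.subtype)
          (((Lc (φ.compl₁₂ W.subtype W.subtype))^[k] ⊤).map W.subtype)) ∧
      ((Rc φ)^[k] ⊤ =
          (((Rc (φ.compl₁₂ U.subtype U.subtype))^[k] ⊤).map U.subtype) ⊔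
          (((Rc (φ.compl₁₂ W.subtype W.subtype))^[k] ⊤).map W.subtype) ∧
        Disjoint (((Rc (φ.compl₁₂ U.subtype U.subtype))^[k] ⊤).map U.subtype)
          (((Rc (φ.compl₁₂ W.subtype W.subtype))^[k] ⊤).map W.subtype)) := by
  intro k _
  have hdisj (A : Submodule F U) (B : Submodule F W) :
      Disjoint (A.map U.subtype) (B.map W.subtype) :=
    hcompl.disjoint.mono (Submodule.map_subtype_le U A) (Submodule.map_subtype_le W B)
  have horth_flip : ∀ u ∈ U, ∀ w ∈ W, φ.flip u w = 0 ∧ φ.flip w u = 0 :=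
    fun u hu w hw => (horth u hu w hw).symm
  refine ⟨⟨iterate_Lc_top φ hcompl.codisjoint horth k, hdisj _ _⟩, ?_, hdisj _ _⟩
  rw [Rc_eq_Lc_flip, Rc_eq_Lc_flip, Rc_eq_Lc_flip, LinearMap.flip_compl₁₂,
    LinearMap.flip_compl₁₂]
  exact iterate_Lc_top φ.flip hcompl.codisjoint horth_flip k
end

section
/- Let W be a vector space over F of dimension 2s+1 with basis f_1, ..., f_{2s+1} and let φ be the bilinear form with Gram matrix J_{2s+1}(0). Then the radical of the form φ − φ' (where φ'(v,w) = φ(w,v)) is the one-dimensional subspace spanned by f_1 + f_3 + ... + f_{2s+1}. -/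
variable {F V : Type*} [Field F] [AddCommGroup V] [Module F V]

/-!
The form `ψ = φ - φ'` is skew, so its left and right radicals are both `ker ψ`. Indexing from `0`
and extending the coordinates `c` of `v` by zero, `ψ v f_j = c (j + 1) - c (j - 1)`, the second term
missing for `j = 0`. Hence `v ∈ ker ψ` iff `c 1 = 0` and `c (m + 2) = c m` for `m < 2s`, i.e. iff `c`
vanishes at odd indices and is constant at even ones; the last condition, `c (2s + 1) = c (2s - 1)`,
is compatible with `c 0 ≠ 0` only because `2s - 1` is odd.
-/

open Finset

theorem Lc_top (ψ : V →ₗ[F] V →ₗ[F] F) : Lc ψ ⊤ = LinearMap.ker ψ := by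
  ext v
  simp [Lc, LinearMap.ext_iff]

theorem Rc_top (ψ : V →ₗ[F] V →ₗ[F] F) : Rc ψ ⊤ = LinearMap.ker ψ.flip := by
  ext v
  simp [Rc, LinearMap.ext_iff]

theorem flip_sub_flip_eq_neg (φ : V →ₗ[F] V →ₗ[F] F) : (φ - φ.flip).flip = -(φ - φ.flip) := by
  ext v w
  simp

theorem eq_ite_even_of_add_two_eq {M : Type*} [Zero M] {n : ℕ} {c : ℕ → M} (h1 : c 1 = 0)
    (hstep : ∀ m < n, c (m + 2) = c m) : ∀ k ≤ n + 1, c k = if Even k then c 0 else 0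
  | 0, _ => by simp
  | 1, _ => by simp [h1]
  | k + 2, hk => by
    rw [hstep k (by omega), eq_ite_even_of_add_two_eq h1 hstep k (by omega)]
    simp [Nat.even_add]

namespace Module.Basis

variable {n : ℕ} (f : Basis (Fin n) F V)

-- Extending by zero lets the boundary cases of the recurrence be stated uniformly.
noncomputable def natCoord (v : V) : ℕ → F :=
  Function.extend Fin.val (f.repr v) 0

theorem natCoord_val (v : V) (i : Fin n) : f.natCoord v i = f.repr v i :=
  Fin.val_injective.extend_apply _ _ i

theorem natCoord_of_le (v : V) {k : ℕ} (hk : n ≤ k) : f.natCoord v k = 0 :=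
  Function.extend_apply' _ _ _ fun ⟨i, hi⟩ => by omega

theorem sum_repr_mul_ite_eq (v : V) (a : ℕ) :
    ∑ i, f.repr v i * (if (i : ℕ) = a then 1 else 0) = f.natCoord v a := by
  simp_rw [← natCoord_val, mul_ite, mul_one, mul_zero]
  rw [Fin.sum_univ_eq_sum_range (fun k => if k = a then f.natCoord v k else 0), sum_ite_eq']
  split_ifs with ha
  · rfl
  · exact (f.natCoord_of_le v (by simpa using ha)).symm

theorem apply_eq_sum_repr_left (φ : V →ₗ[F] V →ₗ[F] F) (v w : V) :
    φ v w = ∑ i, f.repr v i * φ (f i) w := by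
  conv_lhs => rw [← f.sum_repr v]
  simp only [map_sum, map_smul, LinearMap.sum_apply, LinearMap.smul_apply, smul_eq_mul]

theorem apply_eq_sum_repr_right (φ : V →ₗ[F] V →ₗ[F] F) (v w : V) :
    φ v w = ∑ i, f.repr w i * φ v (f i) := by
  conv_lhs => rw [← f.sum_repr w]
  simp only [map_sum, map_smul, smul_eq_mul]

end Module.Basis

section LowerJordanBlock

variable {n : ℕ} {φ : V →ₗ[F] V →ₗ[F] F} {f : Module.Basis (Fin (n + 1)) F V}
  (hf : ∀ i j : Fin (n + 1), φ (f i) (f j) = if (i : ℕ) = (j : ℕ) + 1 then 1 else 0)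
include hf

theorem jordan_apply_basis_right (v : V) (j : Fin (n + 1)) :
    φ v (f j) = f.natCoord v (j + 1) := by
  rw [f.apply_eq_sum_repr_left]
  simp only [hf, f.sum_repr_mul_ite_eq]

theorem jordan_basis_zero_apply (v : V) : φ (f 0) v = 0 := by
  rw [f.apply_eq_sum_repr_right]
  simp [hf]

theorem jordan_basis_succ_apply (v : V) (m : Fin n) : φ (f m.succ) v = f.natCoord v m := by
  rw [f.apply_eq_sum_repr_right]
  simp only [hf, Fin.val_succ, add_left_inj, eq_comm (a := (m : ℕ)), f.sum_repr_mul_ite_eq]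

theorem mem_ker_sub_flip_iff (v : V) :
    v ∈ LinearMap.ker (φ - φ.flip) ↔
      f.natCoord v 1 = 0 ∧ ∀ m < n, f.natCoord v (m + 2) = f.natCoord v m := by
  have h_ext : (φ - φ.flip) v = 0 ↔ ∀ j, (φ - φ.flip) v (f j) = 0 :=
    ⟨fun h j => by simp [h], fun h => f.ext (by simpa using h)⟩
  rw [LinearMap.mem_ker, h_ext, Fin.forall_fin_succ]
  simp only [LinearMap.sub_apply, LinearMap.flip_apply, jordan_apply_basis_right hf,
    jordan_basis_zero_apply hf, jordan_basis_succ_apply hf, sub_eq_zero, Fin.val_zero, Fin.val_succ]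
  simp [Fin.forall_iff]

end LowerJordanBlock

noncomputable def Module.Basis.evenSum {s : ℕ} (f : Module.Basis (Fin (2 * s + 1)) F V) : V :=
  ∑ j : Fin (s + 1), f ⟨2 * j, by grind⟩

theorem Module.Basis.natCoord_evenSum {s : ℕ} (f : Module.Basis (Fin (2 * s + 1)) F V) (k : ℕ) :
    f.natCoord f.evenSum k = if Even k ∧ k ≤ 2 * s then 1 else 0 := by
  by_cases hk : k < 2 * s + 1
  · rw [show k = ((⟨k, hk⟩ : Fin (2 * s + 1)) : ℕ) from rfl, natCoord_val, evenSum]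
    simp only [map_sum, Finsupp.finsetSum_apply, repr_self, Finsupp.single_apply, Fin.ext_iff]
    rw [Fin.sum_univ_eq_sum_range (fun j => if 2 * j = k then (1 : F) else 0)]
    obtain ⟨t, rfl | rfl⟩ := Nat.even_or_odd' k
    · simp [show t < s + 1 by omega, show t ≤ s by omega]
    · rw [sum_eq_zero fun j _ => if_neg (by omega), if_neg (by simp)]
  · rw [natCoord_of_le _ _ (by omega), if_neg (by omega)]

theorem ker_sub_flip_eq_span_evenSum {s : ℕ} {φ : V →ₗ[F] V →ₗ[F] F}
    {f : Module.Basis (Fin (2 * s + 1)) F V}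
    (hf : ∀ i j : Fin (2 * s + 1), φ (f i) (f j) = if (i : ℕ) = (j : ℕ) + 1 then 1 else 0) :
    LinearMap.ker (φ - φ.flip) = Submodule.span F {f.evenSum} := by
  apply le_antisymm
  · intro v hv
    obtain ⟨h1, hstep⟩ := (mem_ker_sub_flip_iff hf v).1 hv
    refine Submodule.mem_span_singleton.2 ⟨f.natCoord v 0, f.ext_elem_iff.2 fun i => ?_⟩
    rw [map_smul, Finsupp.smul_apply, ← f.natCoord_val, ← f.natCoord_val, f.natCoord_evenSum,
      eq_ite_even_of_add_two_eq h1 hstep i (by omega)]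
    simp [show (i : ℕ) ≤ 2 * s by omega]
  · rw [Submodule.span_le, Set.singleton_subset_iff, SetLike.mem_coe, mem_ker_sub_flip_iff hf]
    simp only [f.natCoord_evenSum]
    refine ⟨by simp, fun m hm => ?_⟩
    have h_even : Even m → (m + 2 ≤ 2 * s ↔ m ≤ 2 * s) := fun ⟨t, ht⟩ => by omega
    simp [Nat.even_add, and_congr_right h_even]

theorem radical_of_asymmetrized_odd_gabriel_block
    (s : ℕ) {W : Type*} [AddCommGroup W] [Module F W]
    (φ : W →ₗ[F] W →ₗ[F] F) (f : Module.Basis (Fin (2 * s + 1)) F W)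
    (hf : ∀ i j : Fin (2 * s + 1),
      φ (f i) (f j) = if (i : ℕ) = (j : ℕ) + 1 then 1 else 0) :
    Lc (φ - φ.flip) ⊤ ⊓ Rc (φ - φ.flip) ⊤ =
      Submodule.span F
        {∑ j : Fin (s + 1), f ⟨2 * (j : ℕ), by have := j.2; omega⟩} := by
  rw [Lc_top, Rc_top, flip_sub_flip_eq_neg, LinearMap.ker_neg, inf_idem]
  exact ker_sub_flip_eq_span_evenSum hf
end

section
/- Let W be an F-vector space with basis f_k^p indexed by 1 ≤ k ≤ s, 1 ≤ p ≤ m, and for each p set E^p = f_1^p + f_2^p + ... + f_s^p. Suppose g ∈ End_F(W) preserves each subspace span(f_k^1, ..., f_k^m) for 1 ≤ k ≤ s, preserves the subspace span(E^1, ..., E^m), and fixes each of f_1^1, ..., f_1^m. Then g is the identity on W. -/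
/-! Let `V_k` be the span of the `k`-th layer `f (k, ·)` and `D` the span of the diagonal
vectors `E^p`. Since `W = ⨁ V_k` and `g` preserves every `V_k`, the `(k, ·)`-coordinates of
`g E^p = ∑ k, g (f (k, p))` are exactly the coordinates of `g (f (k, p))`, so `g` acts on every
layer by the same matrix as soon as `g E^p ∈ D`, i.e. as soon as the coordinates of `g E^p` do not
depend on the layer. That matrix is the identity on the layer `k = 0`. -/

open Submodule

namespace Module.Basis

variable {ι κ R M : Type*} [Semiring R] [AddCommMonoid M] [Module R M]
  (f : Basis (ι × κ) R M)

def layer (k : ι) : Submodule R M :=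
  span R (Set.range fun p : κ => f (k, p))

def diagonal [Fintype ι] : Submodule R M :=
  span R (Set.range fun p : κ => ∑ k : ι, f (k, p))

variable {f}

theorem mem_layer_self (k : ι) (p : κ) : f (k, p) ∈ f.layer k :=
  subset_span ⟨p, rfl⟩

theorem repr_apply_eq_zero_of_mem_layer {x : M} {k k' : ι} (hx : x ∈ f.layer k) (hk : k' ≠ k)
    (q : κ) : f.repr x (k', q) = 0 := by
  have hrange : (Set.range fun p : κ => f (k, p)) = f '' {i | i.1 = k} := by
    ext y
    simp [eq_comm]
  rw [layer, hrange, mem_span_image] at hx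
  exact Finsupp.notMem_support_iff.mp fun hq => hk (hx hq)

theorem repr_sum_apply_of_mem_layer [Fintype ι] {x : ι → M} (hx : ∀ k, x k ∈ f.layer k)
    (k : ι) (q : κ) : f.repr (∑ k', x k') (k, q) = f.repr (x k) (k, q) := by
  rw [map_sum, Finset.sum_apply', Finset.sum_eq_single k
    (fun k' _ hk' => repr_apply_eq_zero_of_mem_layer (hx k') hk'.symm q)
    (fun h => absurd (Finset.mem_univ k) h)]

theorem repr_apply_eq_of_mem_diagonal [Fintype ι] {x : M} (hx : x ∈ f.diagonal)
    (k k' : ι) (q : κ) : f.repr x (k, q) = f.repr x (k', q) := by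
  induction hx using span_induction with
  | mem y hy =>
    obtain ⟨p, rfl⟩ := hy
    rw [repr_sum_apply_of_mem_layer (fun k => mem_layer_self k p),
      repr_sum_apply_of_mem_layer (fun k => mem_layer_self k p)]
    classical
    simp only [repr_self, Finsupp.single_apply, Prod.mk.injEq, true_and]
  | zero => simp
  | add y z _ _ hy hz => simp [hy, hz]
  | smul a y _ hy => simp [hy]

end Module.Basis

open Module.Basis

theorem endomorphism_fixing_layers_and_diagonal_is_id
    {F W : Type*} [Field F] [AddCommGroup W] [Module F W]
    (s m : ℕ) (hs : 0 < s)
    (f : Module.Basis (Fin s × Fin m) F W) (g : W →ₗ[F] W)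
    (hlayers : ∀ k : Fin s,
      ∀ x ∈ Submodule.span F (Set.range fun p : Fin m => f (k, p)),
        g x ∈ Submodule.span F (Set.range fun p : Fin m => f (k, p)))
    (hE : ∀ x ∈ Submodule.span F
        (Set.range fun p : Fin m => ∑ k : Fin s, f (k, p)),
      g x ∈ Submodule.span F
        (Set.range fun p : Fin m => ∑ k : Fin s, f (k, p)))
    (hfix : ∀ p : Fin m, g (f (⟨0, hs⟩, p)) = f (⟨0, hs⟩, p)) :
    g = LinearMap.id := by
  set k₀ : Fin s := ⟨0, hs⟩
  have hgf_layer (k : Fin s) (p : Fin m) : g (f (k, p)) ∈ f.layer k :=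
    hlayers k _ (mem_layer_self k p)
  have hdiag (k : Fin s) (p q : Fin m) :
      f.repr (g (f (k, p))) (k, q) = f.repr (g (f (k₀, p))) (k₀, q) := by
    have hgE := repr_apply_eq_of_mem_diagonal (hE _ (subset_span ⟨p, rfl⟩)) k k₀ q
    rwa [map_sum, repr_sum_apply_of_mem_layer (fun k => hgf_layer k p),
      repr_sum_apply_of_mem_layer (fun k => hgf_layer k p)] at hgE
  refine f.ext fun ⟨k, p⟩ => f.repr.injective (Finsupp.ext fun ⟨k', q⟩ => ?_)
  rcases eq_or_ne k' k with rfl | hk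
  · rw [hdiag, hfix, LinearMap.id_apply]
    simp only [repr_self, Finsupp.single_apply, Prod.mk.injEq, true_and]
  · rw [repr_apply_eq_zero_of_mem_layer (hgf_layer k p) hk, LinearMap.id_apply, f.repr_self,
      Finsupp.single_eq_of_ne (by simp [hk])]
end

section
/- Let (W,φ) be a finite-dimensional bilinear space over a field F and suppose Y and Z are totally isotropic subspaces of W, invariant under the isometry group G(W,φ), such that W = Y ⊕ Z and the restriction of φ to Z × Y is non-degenerate. Then: (1) there exists a unique u ∈ End_F(Y) with φ(y,z) = φ(z, u y) for all y ∈ Y, z ∈ Z; (2) for every g ∈ G(W,φ), the restriction g|_Y commutes with u; (3) the restriction map ρ : G(W,φ) → C_{GL(Y)}(u), g ↦ g|_Y, is a group isomorphism onto the centralizer of u in GL(Y). -/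
variable {F V : Type*} [Field F] [AddCommGroup V] [Module F V]

/-!
Non-degeneracy and finite dimension make `φ : Z × Y → F` a perfect pairing, so `Z ≅ Y*` and
`Y ≅ Z*`; `u` is the map `Y → Z* ≅ Y` induced by `φ : Y × Z → F`. An isometry `g` preserving
`Y` and `Z` is determined by `b = g|_Y`, because `g|_Z` must be the contragredient of `b`.
Conversely, as `Y` and `Z` are totally isotropic, `b ⊕ b^∨` is an isometry as soon as it
preserves `φ` on `Y × Z`, and `φ(b y, b^∨ z) = φ(b^∨ z, u b y)` equals `φ(y, z) = φ(z, u y)`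
exactly when `u b = b u`.
-/

section SplitBilinearSpace

open LinearMap Submodule

variable {φ : V →ₗ[F] V →ₗ[F] F}

theorem IsIsom.symm {g : V ≃ₗ[F] V} (hg : IsIsom φ g) :
    IsIsom φ g.symm := fun v w => by
  simpa using (hg (g.symm v) (g.symm w)).symm

variable {Y Z : Submodule F V}

noncomputable def LinearEquiv.ofIsCompl (h : IsCompl Y Z) (b : Y ≃ₗ[F] Y) (c : Z ≃ₗ[F] Z) :
    V ≃ₗ[F] V :=
  (prodEquivOfIsCompl Y Z h).symm ≪≫ₗ b.prodCongr c ≪≫ₗ prodEquivOfIsCompl Y Z h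

theorem LinearEquiv.ofIsCompl_apply_left (h : IsCompl Y Z) (b : Y ≃ₗ[F] Y) (c : Z ≃ₗ[F] Z)
    (y : Y) : LinearEquiv.ofIsCompl h b c y = b y := by
  simp [LinearEquiv.ofIsCompl]

theorem LinearEquiv.ofIsCompl_apply_right (h : IsCompl Y Z) (b : Y ≃ₗ[F] Y) (c : Z ≃ₗ[F] Z)
    (z : Z) : LinearEquiv.ofIsCompl h b c z = c z := by
  simp [LinearEquiv.ofIsCompl]

theorem isIsom_ofIsCompl (hcompl : IsCompl Y Z)
    (hYiso : ∀ y ∈ Y, ∀ y' ∈ Y, φ y y' = 0) (hZiso : ∀ z ∈ Z, ∀ z' ∈ Z, φ z z' = 0)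
    (b : Y ≃ₗ[F] Y) (c : Z ≃ₗ[F] Z)
    (hbc : ∀ (y : Y) (z : Z), φ (b y) (c z) = φ y z)
    (hcb : ∀ (z : Z) (y : Y), φ (c z) (b y) = φ z y) :
    IsIsom φ (LinearEquiv.ofIsCompl hcompl b c) := by
  intro v w
  obtain ⟨⟨y, z⟩, rfl⟩ := (prodEquivOfIsCompl Y Z hcompl).surjective v
  obtain ⟨⟨y', z'⟩, rfl⟩ := (prodEquivOfIsCompl Y Z hcompl).surjective w
  simp only [coe_prodEquivOfIsCompl', map_add, LinearMap.add_apply,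
    LinearEquiv.ofIsCompl_apply_left, LinearEquiv.ofIsCompl_apply_right]
  rw [hYiso _ (b y).2 _ (b y').2, hZiso _ (c z).2 _ (c z').2, hYiso _ y.2 _ y'.2,
    hZiso _ z.2 _ z'.2, hbc, hcb]

theorem isPerfPair_domRestrict₁₂ [FiniteDimensional F V]
    (hndr : ∀ z : Z, (∀ y : Y, φ z y = 0) → z = 0)
    (hndl : ∀ y : Y, (∀ z : Z, φ z y = 0) → y = 0) :
    (φ.domRestrict₁₂ Z Y).IsPerfPair :=
  .of_injective ((injective_iff_map_eq_zero _).mpr fun z hz => hndr z fun y => congr($hz y))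
    ((injective_iff_map_eq_zero _).mpr fun y hy => hndl y fun z => congr($hy z))

variable [(φ.domRestrict₁₂ Z Y).IsPerfPair]

theorem eq_of_forall_apply_eq_left {z₁ z₂ : Z} (h : ∀ y : Y, φ z₁ y = φ z₂ y) : z₁ = z₂ :=
  (IsPerfPair.bijective_left (φ.domRestrict₁₂ Z Y)).injective (LinearMap.ext h)

theorem eq_of_forall_apply_eq_right {y₁ y₂ : Y} (h : ∀ z : Z, φ z y₁ = φ z y₂) : y₁ = y₂ :=
  (IsPerfPair.bijective_right (φ.domRestrict₁₂ Z Y)).injective (LinearMap.ext h)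

theorem existsUnique_end_forall_apply_eq :
    ∃! u : Module.End F Y, ∀ (y : Y) (z : Z), φ y z = φ z (u y) := by
  set B := φ.domRestrict₁₂ Z Y
  have hu (y : Y) (z : Z) : φ y z = φ z (B.flip.toPerfPair.symm (φ.domRestrict₁₂ Y Z y)) :=
    congr($(B.flip.apply_symm_toPerfPair_self (φ.domRestrict₁₂ Y Z y)) z).symm
  refine ⟨B.flip.toPerfPair.symm ∘ₗ φ.domRestrict₁₂ Y Z, hu, fun u hu' => ?_⟩
  ext1 y
  exact eq_of_forall_apply_eq_right (φ := φ) (Z := Z) fun z => (hu' y z).symm.trans (hu y z)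

theorem IsIsom.commute_end {u : Module.End F Y} (hu : ∀ (y : Y) (z : Z), φ y z = φ z (u y))
    {g : V ≃ₗ[F] V} (hg : IsIsom φ g) (hgZ : ∀ z ∈ Z, g.symm z ∈ Z)
    (b : Module.End F Y) (hb : ∀ y : Y, (b y : V) = g y) (y : Y) : u (b y) = b (u y) := by
  refine eq_of_forall_apply_eq_right (φ := φ) (Z := Z) fun z => ?_
  set z' : Z := ⟨g.symm z, hgZ z z.2⟩
  have hz' : g z' = z := g.apply_symm_apply z
  calc φ z (u (b y)) = φ (b y) z := (hu (b y) z).symm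
    _ = φ (g y) (g z') := by rw [hb y, hz']
    _ = φ z' (u y) := (hg _ _).trans (hu y z')
    _ = φ (g z') (g (u y)) := (hg _ _).symm
    _ = φ z (b (u y)) := by rw [hz', hb (u y)]

theorem IsIsom.eqOn_compl_of_eqOn {g₁ g₂ : V ≃ₗ[F] V} (hg₁ : IsIsom φ g₁) (hg₂ : IsIsom φ g₂)
    (hg₁Z : ∀ z ∈ Z, g₁ z ∈ Z) (hg₂Z : ∀ z ∈ Z, g₂ z ∈ Z) (hg₁Y : ∀ y ∈ Y, g₁.symm y ∈ Y)
    (hY : Set.EqOn g₁ g₂ Y) : Set.EqOn g₁ g₂ Z := by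
  intro z hz
  have key : (⟨g₁ z, hg₁Z z hz⟩ : Z) = ⟨g₂ z, hg₂Z z hz⟩ := by
    refine eq_of_forall_apply_eq_left (φ := φ) (Y := Y) fun y => ?_
    have hy : g₁ (g₁.symm y) = y := g₁.apply_symm_apply y
    calc φ (g₁ z) y = φ z (g₁.symm y) := by rw [← hg₁ z, hy]
      _ = φ (g₂ z) (g₂ (g₁.symm y)) := (hg₂ _ _).symm
      _ = φ (g₂ z) y := by rw [← hY (hg₁Y y y.2), hy]
  exact congr_arg Subtype.val key

variable (φ Z) in
noncomputable def contragredient (b : Y ≃ₗ[F] Y) : Z ≃ₗ[F] Z :=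
  (φ.domRestrict₁₂ Z Y).toPerfPair ≪≫ₗ b.symm.dualMap ≪≫ₗ (φ.domRestrict₁₂ Z Y).toPerfPair.symm

theorem contragredient_apply_apply (b : Y ≃ₗ[F] Y) (z : Z) (y : Y) :
    φ (contragredient φ Z b z) (b y) = φ z y := by
  change φ.domRestrict₁₂ Z Y ((φ.domRestrict₁₂ Z Y).toPerfPair.symm _) (b y) = _
  rw [apply_symm_toPerfPair_self]
  simp [domRestrict₁₂_apply]

theorem exists_isIsom_apply_eq (hcompl : IsCompl Y Z)
    (hYiso : ∀ y ∈ Y, ∀ y' ∈ Y, φ y y' = 0) (hZiso : ∀ z ∈ Z, ∀ z' ∈ Z, φ z z' = 0)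
    {u : Module.End F Y} (hu : ∀ (y : Y) (z : Z), φ y z = φ z (u y))
    (b : Y ≃ₗ[F] Y) (hb : ∀ y : Y, u (b y) = b (u y)) :
    ∃ g : V ≃ₗ[F] V, IsIsom φ g ∧ ∀ y : Y, g y = b y := by
  set c := contragredient φ Z b
  refine ⟨LinearEquiv.ofIsCompl hcompl b c, isIsom_ofIsCompl hcompl hYiso hZiso b c ?_
    (contragredient_apply_apply b), LinearEquiv.ofIsCompl_apply_left hcompl b c⟩
  intro y z
  calc φ (b y) (c z) = φ (c z) (b (u y)) := by rw [hu, hb]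
    _ = φ y z := (contragredient_apply_apply b z (u y)).trans (hu y z).symm

end SplitBilinearSpace

theorem isometry_group_of_split_totally_isotropic_pair
    [FiniteDimensional F V] (φ : V →ₗ[F] V →ₗ[F] F)
    (Y Z : Submodule F V)
    (hYiso : ∀ y ∈ Y, ∀ y' ∈ Y, φ y y' = 0)
    (hZiso : ∀ z ∈ Z, ∀ z' ∈ Z, φ z z' = 0)
    (hGY : ∀ g : V ≃ₗ[F] V, IsIsom φ g → ∀ y ∈ Y, g y ∈ Y)
    (hGZ : ∀ g : V ≃ₗ[F] V, IsIsom φ g → ∀ z ∈ Z, g z ∈ Z)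
    (hcompl : IsCompl Y Z)
    (hndr : ∀ z : Z, (∀ y : Y, φ (z : V) (y : V) = 0) → z = 0)
    (hndl : ∀ y : Y, (∀ z : Z, φ (z : V) (y : V) = 0) → y = 0) :
    (∃! u : Module.End F Y,
      ∀ (y : Y) (z : Z), φ (y : V) (z : V) = φ (z : V) ((u y : Y) : V)) ∧
    (∀ u : Module.End F Y,
      (∀ (y : Y) (z : Z), φ (y : V) (z : V) = φ (z : V) ((u y : Y) : V)) →
      (∀ g : V ≃ₗ[F] V, IsIsom φ g →
        ∀ b : Y ≃ₗ[F] Y, (∀ y : Y, ((b y : Y) : V) = g (y : V)) →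
          ∀ y : Y, u (b y) = b (u y)) ∧
      (∀ g₁ g₂ : V ≃ₗ[F] V, IsIsom φ g₁ → IsIsom φ g₂ →
        (∀ y ∈ Y, g₁ y = g₂ y) → g₁ = g₂) ∧
      (∀ b : Y ≃ₗ[F] Y, (∀ y : Y, u (b y) = b (u y)) →
        ∃ g : V ≃ₗ[F] V, IsIsom φ g ∧ ∀ y : Y, g (y : V) = ((b y : Y) : V))) := by
  have := isPerfPair_domRestrict₁₂ hndr hndl
  refine ⟨existsUnique_end_forall_apply_eq, fun u hu => ⟨?_, ?_, ?_⟩⟩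
  · exact fun g hg b hb => hg.commute_end hu (hGZ _ hg.symm) b hb
  · intro g₁ g₂ hg₁ hg₂ hY
    exact LinearMap.ext_on_codisjoint hcompl.codisjoint hY
      (hg₁.eqOn_compl_of_eqOn hg₂ (hGZ _ hg₁) (hGZ _ hg₂) (hGY _ hg₁.symm) hY)
  · exact exists_isIsom_apply_eq hcompl hYiso hZiso hu
end

section
/- Let (V,φ) be a non-degenerate bilinear space over F with asymmetry σ (so φ(y,x) = φ(x,σy)), and let p_σ be the minimal polynomial of σ. Then the symmetric form φ⁺ = φ + φ' is non-degenerate if and only if p_σ(−1) ≠ 0, and the alternating form φ⁻ = φ − φ' is non-degenerate if and only if p_σ(1) ≠ 0. -/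
variable {F V : Type*} [Field F] [AddCommGroup V] [Module F V]

/-! For `μ = ±1` write `φ - μ φ'`. By the asymmetry, `(φ - μ φ')(w, v) = φ(v, (σ - μ) w)`, so an
eigenvector of `σ` for `μ` lies in the left radical of `φ - μ φ'`. Conversely
`(φ - μ φ')(v, w) = φ(v, (1 - μ σ) w)`, and since `μ² = 1` we have `1 - μ σ = μ (μ - σ)`, which is
invertible when `μ` is not a root of the minimal polynomial; then the non-degeneracy of `φ` passes
to `φ - μ φ'`. -/

namespace LinearMap

theorem SeparatingLeft.compl₂_of_surjective {φ : V →ₗ[F] V →ₗ[F] F} (hφ : φ.SeparatingLeft)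
    {g : V →ₗ[F] V} (hg : Function.Surjective g) : (φ.compl₂ g).SeparatingLeft := by
  intro v hv
  refine hφ v fun w ↦ ?_
  obtain ⟨u, rfl⟩ := hg w
  exact hv u

theorem sub_smul_flip_eq_compl₂ {φ : V →ₗ[F] V →ₗ[F] F} {σ : Module.End F V}
    (hσ : ∀ x y, φ y x = φ x (σ y)) (μ : F) : φ - μ • φ.flip = φ.compl₂ (1 - μ • σ) := by
  ext v w
  simp [hσ v w]

theorem sub_smul_flip_apply_eq_zero_of_apply_eq_smul {φ : V →ₗ[F] V →ₗ[F] F}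
    {σ : Module.End F V} (hσ : ∀ x y, φ y x = φ x (σ y)) {μ : F} {w : V} (hw : σ w = μ • w)
    (v : V) : (φ - μ • φ.flip) w v = 0 := by
  simp [hσ v w, hw]

end LinearMap

namespace Module.End

variable [FiniteDimensional F V]

theorem isUnit_algebraMap_sub_of_minpoly_eval_ne_zero {σ : End F V} {μ : F}
    (h : (minpoly F σ).eval μ ≠ 0) : IsUnit (algebraMap F (End F V) μ - σ) :=
  spectrum.notMem_iff.mp fun hμ ↦
    h (hasEigenvalue_iff_isRoot.mp (hasEigenvalue_iff_mem_spectrum.mpr hμ))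

theorem surjective_one_sub_smul_of_minpoly_eval_ne_zero {σ : End F V} {μ : F} (hμ : μ * μ = 1)
    (h : (minpoly F σ).eval μ ≠ 0) : Function.Surjective ⇑(1 - μ • σ : End F V) := by
  have hfactor : 1 - μ • σ = algebraMap F (End F V) μ * (algebraMap F (End F V) μ - σ) := by
    rw [mul_sub, ← map_mul, hμ, map_one, Algebra.algebraMap_eq_smul_one, smul_mul_assoc, one_mul]
  rw [hfactor]
  exact (isUnit_iff _).mp (((IsUnit.of_mul_eq_one μ hμ).map _).mul
    (isUnit_algebraMap_sub_of_minpoly_eval_ne_zero h)) |>.surjective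

end Module.End

open Module.End in
theorem LinearMap.separatingLeft_sub_smul_flip_iff_minpoly_eval_ne_zero [FiniteDimensional F V]
    {φ : V →ₗ[F] V →ₗ[F] F} (hφ : φ.SeparatingLeft) {σ : Module.End F V}
    (hσ : ∀ x y, φ y x = φ x (σ y)) {μ : F} (hμ : μ * μ = 1) :
    (φ - μ • φ.flip).SeparatingLeft ↔ (minpoly F σ).eval μ ≠ 0 := by
  refine ⟨fun hsep hroot ↦ ?_, fun h ↦ ?_⟩
  · obtain ⟨w, hw⟩ := (hasEigenvalue_iff_isRoot.mpr hroot).exists_hasEigenvector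
    exact hw.2 (hsep w (sub_smul_flip_apply_eq_zero_of_apply_eq_smul hσ hw.apply_eq_smul))
  · rw [sub_smul_flip_eq_compl₂ hσ]
    exact hφ.compl₂_of_surjective (surjective_one_sub_smul_of_minpoly_eval_ne_zero hμ h)

theorem symmetric_alternating_parts_nondegenerate_iff_minpoly_general
    [FiniteDimensional F V] (φ : V →ₗ[F] V →ₗ[F] F)
    (hndl : ∀ v : V, (∀ w : V, φ v w = 0) → v = 0)
    (σ : V ≃ₗ[F] V) (hσ : ∀ x y : V, φ y x = φ x (σ y)) :
    ((∀ v : V, (∀ w : V, (φ + φ.flip) v w = 0) → v = 0) ↔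
      (minpoly F (σ.toLinearMap : Module.End F V)).eval (-1) ≠ 0) ∧
    ((∀ v : V, (∀ w : V, (φ - φ.flip) v w = 0) → v = 0) ↔
      (minpoly F (σ.toLinearMap : Module.End F V)).eval 1 ≠ 0) := by
  have key (μ : F) := LinearMap.separatingLeft_sub_smul_flip_iff_minpoly_eval_ne_zero hndl
    (σ := σ.toLinearMap) hσ (μ := μ)
  have hplus : φ + φ.flip = φ - (-1 : F) • φ.flip := by ext; simp
  have hminus : φ - φ.flip = φ - (1 : F) • φ.flip := by rw [one_smul]
  rw [hplus, hminus]
  exact ⟨key (-1) (by norm_num), key 1 (one_mul 1)⟩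

theorem symmetric_alternating_parts_nondegenerate_iff_minpoly
    [FiniteDimensional F V] (φ : V →ₗ[F] V →ₗ[F] F)
    (hndl : ∀ v : V, (∀ w : V, φ v w = 0) → v = 0)
    (hndr : ∀ v : V, (∀ w : V, φ w v = 0) → v = 0)
    (σ : V ≃ₗ[F] V) (hσ : ∀ x y : V, φ y x = φ x (σ y)) :
    ((∀ v : V, (∀ w : V, (φ + φ.flip) v w = 0) → v = 0) ↔
      (minpoly F (σ.toLinearMap : Module.End F V)).eval (-1) ≠ 0) ∧
    ((∀ v : V, (∀ w : V, (φ - φ.flip) v w = 0) → v = 0) ↔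
      (minpoly F (σ.toLinearMap : Module.End F V)).eval 1 ≠ 0) :=
  symmetric_alternating_parts_nondegenerate_iff_minpoly_general φ hndl σ hσ
end

section
/- Let (V,φ) be a non-degenerate bilinear space with asymmetry σ, and suppose φ⁺ = φ + φ' is non-degenerate. Let σ^{+-} be the unique endomorphism with φ⁻(x,y) = φ⁺(x, σ^{+-} y) for all x,y. Then σ^{+-} lies in the orthogonal Lie algebra of φ⁺, i.e. φ⁺(σ^{+-} x, y) + φ⁺(x, σ^{+-} y) = 0 for all x, y ∈ V. Similarly, if φ⁻ = φ − φ' is non-degenerate and σ^{-+} satisfies φ⁺(x,y) = φ⁻(x, σ^{-+} y), then φ⁻(σ^{-+} x, y) + φ⁻(x, σ^{-+} y) = 0 for all x,y. -/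
variable {F V : Type*} [Field F] [AddCommGroup V] [Module F V]

section

variable {R M : Type*} [CommRing R] [AddCommGroup M] [Module R M]

theorem LinearMap.add_flip_apply_comm (φ : M →ₗ[R] M →ₗ[R] R) (x y : M) :
    (φ + φ.flip) y x = (φ + φ.flip) x y := by
  simp only [LinearMap.add_apply, LinearMap.flip_apply, add_comm]

theorem LinearMap.sub_flip_apply_comm (φ : M →ₗ[R] M →ₗ[R] R) (x y : M) :
    (φ - φ.flip) y x = -(φ - φ.flip) x y := by
  simp only [LinearMap.sub_apply, LinearMap.flip_apply, neg_sub]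

theorem apply_comp_add_apply_comp_eq_zero {ψ χ : M →ₗ[R] M →ₗ[R] R} {u : M →ₗ[R] M} {ε δ : R}
    (hεδ : ε * δ = -1) (hψ : ∀ x y, ψ y x = ε * ψ x y) (hχ : ∀ x y, χ y x = δ * χ x y)
    (hu : ∀ x y, χ x y = ψ x (u y)) (x y : M) :
    ψ (u x) y + ψ x (u y) = 0 := by
  have : ψ (u x) y = -ψ x (u y) :=
    calc ψ (u x) y = ε * ψ y (u x) := hψ y (u x)
      _ = ε * δ * χ x y := by rw [← hu, hχ, mul_assoc]
      _ = -ψ x (u y) := by rw [hεδ, hu, neg_one_mul]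
  rw [this, neg_add_cancel]

end

theorem asymmetry_parts_in_lie_algebras_general
    (φ : V →ₗ[F] V →ₗ[F] F) :
    (∀ s : V →ₗ[F] V,
      (∀ v : V, (∀ w : V, (φ + φ.flip) v w = 0) → v = 0) →
      (∀ x y : V, (φ - φ.flip) x y = (φ + φ.flip) x (s y)) →
      ∀ x y : V, (φ + φ.flip) (s x) y + (φ + φ.flip) x (s y) = 0) ∧
    (∀ t : V →ₗ[F] V,
      (∀ v : V, (∀ w : V, (φ - φ.flip) v w = 0) → v = 0) →
      (∀ x y : V, (φ + φ.flip) x y = (φ - φ.flip) x (t y)) →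
      ∀ x y : V, (φ - φ.flip) (t x) y + (φ - φ.flip) x (t y) = 0) :=
  ⟨fun _ _ hs => apply_comp_add_apply_comp_eq_zero (ε := 1) (δ := -1) (mul_neg_one 1)
      (by simpa only [one_mul] using φ.add_flip_apply_comm)
      (by simpa only [neg_one_mul] using φ.sub_flip_apply_comm) hs,
    fun _ _ ht => apply_comp_add_apply_comp_eq_zero (ε := -1) (δ := 1) (neg_one_mul 1)
      (by simpa only [neg_one_mul] using φ.sub_flip_apply_comm)
      (by simpa only [one_mul] using φ.add_flip_apply_comm) ht⟩

theorem asymmetry_parts_in_lie_algebras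
    [FiniteDimensional F V] (φ : V →ₗ[F] V →ₗ[F] F)
    (hndl : ∀ v : V, (∀ w : V, φ v w = 0) → v = 0)
    (hndr : ∀ v : V, (∀ w : V, φ w v = 0) → v = 0) :
    (∀ s : V →ₗ[F] V,
      (∀ v : V, (∀ w : V, (φ + φ.flip) v w = 0) → v = 0) →
      (∀ x y : V, (φ - φ.flip) x y = (φ + φ.flip) x (s y)) →
      ∀ x y : V, (φ + φ.flip) (s x) y + (φ + φ.flip) x (s y) = 0) ∧
    (∀ t : V →ₗ[F] V,
      (∀ v : V, (∀ w : V, (φ - φ.flip) v w = 0) → v = 0) →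
      (∀ x y : V, (φ + φ.flip) x y = (φ - φ.flip) x (t y)) →
      ∀ x y : V, (φ - φ.flip) (t x) y + (φ - φ.flip) x (t y) = 0) :=
  asymmetry_parts_in_lie_algebras_general φ
end

section
/- Let (V,φ) be a non-degenerate bilinear space over a field F such that φ⁺ = φ + φ' is non-degenerate. Let σ⁺ be the unique endomorphism with φ(x,y) = φ⁺(x, σ⁺ y). Then the isometry group G(φ) equals the centralizer of σ⁺ in the isometry group O(φ⁺) of φ⁺: an automorphism a ∈ GL(V) preserves φ if and only if a preserves φ⁺ and commutes with σ⁺. -/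
variable {F V : Type*} [Field F] [AddCommGroup V] [Module F V]

namespace LinearMap

section AddCommMonoid

variable {R M N : Type*} [CommSemiring R] [AddCommMonoid M] [Module R M]
  [AddCommMonoid N] [Module R N]

theorem add_flip_map_map_eq {φ : M →ₗ[R] M →ₗ[R] N} {a : M → M}
    (ha : ∀ x y, φ (a x) (a y) = φ x y) (x y : M) :
    (φ + φ.flip) (a x) (a y) = (φ + φ.flip) x y := by
  simp only [add_apply, flip_apply, ha]

theorem separatingRight_add_flip {φ : M →ₗ[R] M →ₗ[R] N}
    (h : (φ + φ.flip).SeparatingLeft) : (φ + φ.flip).SeparatingRight := by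
  have hsymm : (φ + φ.flip).flip = φ + φ.flip := by
    ext x y
    exact add_comm _ _
  rwa [← flip_separatingLeft, hsymm]

theorem map_map_eq_of_commute {φ ψ : M →ₗ[R] M →ₗ[R] N} {σ a : M →ₗ[R] M}
    (hσ : ∀ x y, φ x y = ψ x (σ y)) (haψ : ∀ x y, ψ (a x) (a y) = ψ x y)
    (haσ : ∀ v, a (σ v) = σ (a v)) (x y : M) :
    φ (a x) (a y) = φ x y := by
  rw [hσ, hσ, ← haσ, haψ]

end AddCommMonoid

/- `ψ (a y) (a (σ v))` and `ψ (a y) (σ (a v))` both equal `φ y v`, and every vector is some `a y`. -/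
theorem commute_of_map_map_eq {R M N : Type*} [CommSemiring R] [AddCommGroup M] [Module R M]
    [AddCommGroup N] [Module R N] {φ ψ : M →ₗ[R] M →ₗ[R] N} {σ : M →ₗ[R] M}
    (hψ : ψ.SeparatingRight) (hσ : ∀ x y, φ x y = ψ x (σ y)) {a : M ≃ₗ[R] M}
    (haφ : ∀ x y, φ (a x) (a y) = φ x y) (haψ : ∀ x y, ψ (a x) (a y) = ψ x y) (v : M) :
    a (σ v) = σ (a v) := by
  refine sub_eq_zero.mp (hψ _ fun x => ?_)
  obtain ⟨y, rfl⟩ := a.surjective x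
  simp only [map_sub, haψ, ← hσ, haφ, sub_self]

end LinearMap

theorem isometry_group_eq_centralizer_in_orthogonal_group_general
    (φ : V →ₗ[F] V →ₗ[F] F)
    (hndplus : ∀ v : V, (∀ w : V, (φ + φ.flip) v w = 0) → v = 0)
    (σp : V →ₗ[F] V)
    (hσp : ∀ x y : V, φ x y = (φ + φ.flip) x (σp y)) :
    ∀ a : V ≃ₗ[F] V,
      (∀ x y : V, φ (a x) (a y) = φ x y) ↔
        ((∀ x y : V, (φ + φ.flip) (a x) (a y) = (φ + φ.flip) x y) ∧
          ∀ v : V, a (σp v) = σp (a v)) := fun _ =>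
  ⟨fun ha => ⟨LinearMap.add_flip_map_map_eq ha,
      LinearMap.commute_of_map_map_eq (LinearMap.separatingRight_add_flip hndplus) hσp ha
        (LinearMap.add_flip_map_map_eq ha)⟩,
    fun ⟨haψ, haσ⟩ => LinearMap.map_map_eq_of_commute hσp haψ haσ⟩

theorem isometry_group_eq_centralizer_in_orthogonal_group
    [FiniteDimensional F V] (φ : V →ₗ[F] V →ₗ[F] F)
    (hndl : ∀ v : V, (∀ w : V, φ v w = 0) → v = 0)
    (hndr : ∀ v : V, (∀ w : V, φ w v = 0) → v = 0)
    (hndplus : ∀ v : V, (∀ w : V, (φ + φ.flip) v w = 0) → v = 0)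
    (σp : V →ₗ[F] V)
    (hσp : ∀ x y : V, φ x y = (φ + φ.flip) x (σp y)) :
    ∀ a : V ≃ₗ[F] V,
      (∀ x y : V, φ (a x) (a y) = φ x y) ↔
        ((∀ x y : V, (φ + φ.flip) (a x) (a y) = (φ + φ.flip) x y) ∧
          ∀ v : V, a (σp v) = σp (a v)) :=
  isometry_group_eq_centralizer_in_orthogonal_group_general φ hndplus σp hσp
end

section
/- Let (V,φ) be a non-degenerate bilinear space over a field F of characteristic ≠ 2 such that φ⁻ = φ − φ' is non-degenerate, and let σ^{-+} be the unique endomorphism with φ⁺(x,y) = φ⁻(x, σ^{-+} y). Then G(φ) = C_{Sp(φ⁻)}(σ^{-+}): an automorphism a ∈ GL(V) preserves φ if and only if a preserves the alternating form φ⁻ and commutes with σ^{-+}. -/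
/-!
Since `φ⁺ + φ⁻ = 2φ` and `2` is invertible, `a` preserves `φ` iff it preserves both `φ⁺` and `φ⁻`.
For an isometry `a` of the non-degenerate form `φ⁻`, preserving `φ⁺ = φ⁻(·, σ⁻⁺ ·)` amounts to
`φ⁻(x, a σ⁻⁺ y) = φ⁻(x, σ⁻⁺ a y)` for all `x`, i.e. to `a σ⁻⁺ = σ⁻⁺ a`.
-/

variable {F V : Type*} [Field F] [AddCommGroup V] [Module F V]

namespace IsIsom

variable {φ ψ χ : V →ₗ[F] V →ₗ[F] F} {a : V ≃ₗ[F] V}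

theorem flip (h : IsIsom φ a) : IsIsom φ.flip a :=
  fun v w => h w v

theorem add (hφ : IsIsom φ a) (hψ : IsIsom ψ a) : IsIsom (φ + ψ) a := fun v w => by
  simp only [LinearMap.add_apply, hφ v w, hψ v w]

theorem sub (hφ : IsIsom φ a) (hψ : IsIsom ψ a) : IsIsom (φ - ψ) a := fun v w => by
  simp only [LinearMap.sub_apply, hφ v w, hψ v w]

theorem of_smul {c : F} (hc : c ≠ 0) (h : IsIsom (c • φ) a) : IsIsom φ a := fun v w =>
  mul_left_cancel₀ hc (h v w)

theorem commute_of_eq_comp {σ : V →ₗ[F] V} (hψsep : ψ.SeparatingRight)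
    (hχ : ∀ x y, χ x y = ψ x (σ y)) (hψ : IsIsom ψ a) (hχa : IsIsom χ a) (v : V) :
    a (σ v) = σ (a v) := by
  refine sub_eq_zero.mp (hψsep _ fun x => ?_)
  obtain ⟨x, rfl⟩ := a.surjective x
  calc ψ (a x) (a (σ v) - σ (a v))
      = ψ x (σ v) - χ (a x) (a v) := by rw [map_sub, hψ, hχ]
    _ = 0 := by rw [hχa, hχ, sub_self]

theorem of_eq_comp {σ : V →ₗ[F] V} (hχ : ∀ x y, χ x y = ψ x (σ y)) (hψ : IsIsom ψ a)
    (hσ : ∀ v, a (σ v) = σ (a v)) : IsIsom χ a := fun v w => by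
  rw [hχ, hχ, ← hσ, hψ]

theorem of_add_flip_of_sub_flip (h2 : (2 : F) ≠ 0) (hp : IsIsom (φ + φ.flip) a)
    (hm : IsIsom (φ - φ.flip) a) : IsIsom φ a := by
  have h2φ : (φ + φ.flip) + (φ - φ.flip) = (2 : F) • φ := by rw [two_smul]; abel
  exact of_smul h2 (h2φ ▸ hp.add hm)

end IsIsom

theorem isRefl_sub_flip (φ : V →ₗ[F] V →ₗ[F] F) : (φ - φ.flip).IsRefl := fun x y h => by
  simp only [LinearMap.sub_apply, LinearMap.flip_apply, sub_eq_zero] at h ⊢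
  exact h.symm

theorem isometry_group_eq_centralizer_in_symplectic_group_general
    (φ : V →ₗ[F] V →ₗ[F] F)
    (hchar : (2 : F) ≠ 0)
    (hndminus : ∀ v : V, (∀ w : V, (φ - φ.flip) v w = 0) → v = 0)
    (σm : V →ₗ[F] V)
    (hσm : ∀ x y : V, (φ + φ.flip) x y = (φ - φ.flip) x (σm y)) :
    ∀ a : V ≃ₗ[F] V,
      (∀ x y : V, φ (a x) (a y) = φ x y) ↔
        ((∀ x y : V, (φ - φ.flip) (a x) (a y) = (φ - φ.flip) x y) ∧
          ∀ v : V, a (σm v) = σm (a v)) := by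
  intro a
  have hsep : (φ - φ.flip).SeparatingRight :=
    ((isRefl_sub_flip φ).nondegenerate_iff_separatingLeft.mpr hndminus).2
  constructor
  · intro h
    have hm : IsIsom (φ - φ.flip) a := IsIsom.sub h (IsIsom.flip h)
    exact ⟨hm, hm.commute_of_eq_comp hsep hσm (IsIsom.add h (IsIsom.flip h))⟩
  · rintro ⟨hm, hc⟩
    exact IsIsom.of_add_flip_of_sub_flip hchar (IsIsom.of_eq_comp hσm hm hc) hm

theorem isometry_group_eq_centralizer_in_symplectic_group
    [FiniteDimensional F V] (φ : V →ₗ[F] V →ₗ[F] F)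
    (hchar : (2 : F) ≠ 0)
    (hndl : ∀ v : V, (∀ w : V, φ v w = 0) → v = 0)
    (hndr : ∀ v : V, (∀ w : V, φ w v = 0) → v = 0)
    (hndminus : ∀ v : V, (∀ w : V, (φ - φ.flip) v w = 0) → v = 0)
    (σm : V →ₗ[F] V)
    (hσm : ∀ x y : V, (φ + φ.flip) x y = (φ - φ.flip) x (σm y)) :
    ∀ a : V ≃ₗ[F] V,
      (∀ x y : V, φ (a x) (a y) = φ x y) ↔
        ((∀ x y : V, (φ - φ.flip) (a x) (a y) = (φ - φ.flip) x y) ∧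
          ∀ v : V, a (σm v) = σm (a v)) :=
  isometry_group_eq_centralizer_in_symplectic_group_general φ hchar hndminus σm hσm
end

section
/- Let m ≥ 2 and let F be any field. Consider the action of GL_m(F) on the space A_m(F) of alternating m×m matrices by congruence: X·A = XAX'. Then A_m(F) is an irreducible GL_m(F)-module, i.e. the only GL_m(F)-invariant subspaces of A_m(F) are 0 and A_m(F). -/
open Matrix

/-- The space of alternating `m × m` matrices over `F`. -/
def altMat (F : Type*) [Field F] (m : ℕ) : Submodule F (Matrix (Fin m) (Fin m) F) where
  carrier := {A | Aᵀ = -A ∧ ∀ i, A i i = 0}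
  add_mem' := by
    rintro A B ⟨hA, hA'⟩ ⟨hB, hB'⟩
    refine ⟨?_, fun i => ?_⟩
    · rw [Matrix.transpose_add, hA, hB, neg_add]
    · simp [Matrix.add_apply, hA' i, hB' i]
  zero_mem' := by simp
  smul_mem' := by
    rintro c A ⟨hA, hA'⟩
    refine ⟨?_, fun i => ?_⟩
    · rw [Matrix.transpose_smul, hA, smul_neg]
    · simp [Matrix.smul_apply, hA' i]

/-- The space of symmetric `m × m` matrices over `F`. -/
def symMat (F : Type*) [Field F] (m : ℕ) : Submodule F (Matrix (Fin m) (Fin m) F) where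
  carrier := {A | Aᵀ = A}
  add_mem' := by
    intro A B hA hB
    show (A + B)ᵀ = A + B
    rw [Matrix.transpose_add, hA, hB]
  zero_mem' := by simp
  smul_mem' := by
    intro c A hA
    show (c • A)ᵀ = c • A
    rw [Matrix.transpose_smul, hA]

/-!
Congruence by the transvection `1 + E_kl` (`k ≠ l`) sends an alternating `A` to
`A + e_k ∧ A_l`, where `A_l` is the `l`-th row of `A`; so an invariant subspace `M` is closed
under `A ↦ e_k ∧ A_l`. If `A ∈ M` has `A p q ≠ 0`, two such moves through a third index `r`
give `e_p ∧ e_r ∈ M` (with only two indices, `A` is already a multiple of `e_p ∧ e_q`).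
From one `e_a ∧ e_b` the same moves reach every `e_c ∧ e_d`, and these span the alternating
matrices.
-/

section Wedge

variable {R : Type*} [CommRing R] {n : Type*}

def wedge (u w : n → R) : Matrix n n R := vecMulVec u w - vecMulVec w u

lemma wedge_apply (u w : n → R) (i j : n) : wedge u w i j = u i * w j - w i * u j := rfl

lemma wedge_row (u w : n → R) (l : n) : wedge u w l = u l • w - w l • u := by
  ext j
  simp [wedge_apply]

lemma wedge_apply_self (u w : n → R) (i : n) : wedge u w i i = 0 := by
  rw [wedge_apply, mul_comm, sub_self]

lemma transpose_wedge (u w : n → R) : (wedge u w)ᵀ = -wedge u w := by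
  ext i j
  simp only [transpose_apply, Matrix.neg_apply, wedge_apply]
  ring

lemma wedge_swap (u w : n → R) : wedge w u = -wedge u w := by
  ext i j
  simp [wedge_apply]

lemma wedge_smul_right (u w : n → R) (c : R) : wedge u (c • w) = c • wedge u w := by
  ext i j
  simp only [wedge_apply, Pi.smul_apply, Matrix.smul_apply, smul_eq_mul]
  ring

lemma exists_eq_sub_transpose_of_alternating [LinearOrder n] {A : Matrix n n R}
    (hskew : Aᵀ = -A) (hdiag : ∀ i, A i i = 0) : ∃ U : Matrix n n R, A = U - Uᵀ := by
  refine ⟨of fun i j => if i < j then A i j else 0, ?_⟩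
  ext a b
  have hba : A b a = -A a b := by simpa using congrFun (congrFun hskew a) b
  rcases lt_trichotomy a b with h | rfl | h
  · simp [h, h.not_gt]
  · simp [hdiag]
  · simp [h, h.not_gt, hba]

lemma eq_smul_wedge_of_forall_eq_or_eq [DecidableEq n] {A : Matrix n n R} (hskew : Aᵀ = -A)
    (hdiag : ∀ i, A i i = 0) {p q : n} (hpq : p ≠ q) (h : ∀ r, r = p ∨ r = q) :
    A = A p q • wedge (Pi.single p 1) (Pi.single q 1) := by
  have hqp : A q p = -A p q := by simpa using congrFun (congrFun hskew p) q
  ext a b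
  rcases h a with rfl | rfl <;> rcases h b with rfl | rfl <;>
    simp [wedge_apply, hdiag, hpq, hpq.symm, hqp]

variable [Fintype n] [DecidableEq n]

lemma sub_transpose_eq_sum_wedge (U : Matrix n n R) :
    U - Uᵀ = ∑ i, ∑ j, U i j • wedge (Pi.single i 1) (Pi.single j 1) := by
  ext a b
  simp [wedge_apply, Matrix.sum_apply, Pi.single_apply, mul_sub, Finset.sum_sub_distrib]

lemma transvection_mul_mul_transpose {A : Matrix n n R} (hskew : Aᵀ = -A) {l : n}
    (hdiag : A l l = 0) (k : n) :
    transvection k l 1 * A * (transvection k l 1)ᵀ = A + wedge (Pi.single k 1) (A l) := by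
  set E : Matrix n n R := single k l 1 with hE
  have hEA : E * A = vecMulVec (Pi.single k 1) (A l) := by
    rw [hE, single_eq_single_vecMulVec_single, vecMulVec_mul, single_vecMul, one_smul]
    rfl
  have hAE : A * Eᵀ = -(E * A)ᵀ := by rw [transpose_mul, hskew, neg_mul, neg_neg]
  -- `E A Eᵀ = A l l • E_kk`; in characteristic 2 its vanishing does not follow from `hskew`
  have hEAE : E * A * Eᵀ = 0 := by simp [E, hdiag]
  calc transvection k l 1 * A * (transvection k l 1)ᵀ
      = A + E * A + A * Eᵀ + E * A * Eᵀ := by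
        rw [transvection, transpose_add, transpose_one]
        noncomm_ring
    _ = A + wedge (Pi.single k 1) (A l) := by
        rw [hAE, hEAE, hEA, transpose_vecMulVec, wedge]
        abel

end Wedge

def IsCongruenceInvariant {R : Type*} [CommRing R] {n : Type*} [Fintype n] [DecidableEq n]
    (M : Submodule R (Matrix n n R)) : Prop :=
  ∀ X : GeneralLinearGroup n R, ∀ A ∈ M, (X : Matrix n n R) * A * (X : Matrix n n R)ᵀ ∈ M

namespace IsCongruenceInvariant

variable {R : Type*} [CommRing R] {n : Type*} [Fintype n] [DecidableEq n]
  {M : Submodule R (Matrix n n R)} {A : Matrix n n R}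

lemma wedge_single_row_mem (hM : IsCongruenceInvariant M) (hA : A ∈ M) (hskew : Aᵀ = -A)
    {k l : n} (hdiag : A l l = 0) (hkl : k ≠ l) : wedge (Pi.single k 1) (A l) ∈ M := by
  let X : GeneralLinearGroup n R := GeneralLinearGroup.mk'' (transvection k l 1)
    (by rw [det_transvection_of_ne _ _ hkl]; exact isUnit_one)
  have hX := hM X A hA
  rw [show (X : Matrix n n R) = transvection k l 1 from rfl,
    transvection_mul_mul_transpose hskew hdiag] at hX
  simpa using M.sub_mem hX hA

lemma wedge_single_mem_left (hM : IsCongruenceInvariant M) {a b : n} (hab : a ≠ b)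
    (h : wedge (Pi.single a 1) (Pi.single b 1) ∈ M) (c : n) :
    wedge (Pi.single c 1) (Pi.single b (1 : R)) ∈ M := by
  rcases eq_or_ne c a with rfl | hca
  · exact h
  · have hrow : wedge (Pi.single a 1) (Pi.single b (1 : R)) a = Pi.single b 1 := by
      simp [wedge_row, hab.symm]
    simpa [hrow] using
      hM.wedge_single_row_mem h (transpose_wedge _ _) (wedge_apply_self _ _ a) hca

lemma wedge_single_mem (hM : IsCongruenceInvariant M) {a b : n} (hab : a ≠ b)
    (h : wedge (Pi.single a 1) (Pi.single b 1) ∈ M) (c d : n) :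
    wedge (Pi.single c 1) (Pi.single d (1 : R)) ∈ M := by
  rcases eq_or_ne d b with rfl | hdb
  · exact hM.wedge_single_mem_left hab h c
  · have hbd : wedge (Pi.single b 1) (Pi.single d (1 : R)) ∈ M := by
      rw [wedge_swap]
      exact M.neg_mem (hM.wedge_single_mem_left hab h d)
    exact hM.wedge_single_mem_left hdb.symm hbd c

section Field

variable {F : Type*} [Field F] {M : Submodule F (Matrix n n F)} {A : Matrix n n F}

lemma wedge_single_mem_of_ne (hM : IsCongruenceInvariant M) (hA : A ∈ M) (hskew : Aᵀ = -A)
    (hdiag : ∀ i, A i i = 0) {p q r : n} (hApq : A p q ≠ 0) (hrp : r ≠ p) (hrq : r ≠ q) :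
    wedge (Pi.single p 1) (Pi.single r 1) ∈ M := by
  have hpq : p ≠ q := by rintro rfl; exact hApq (hdiag p)
  set B := wedge (Pi.single r 1) (A p)
  have hB : B ∈ M := hM.wedge_single_row_mem hA hskew (hdiag p) hrp
  have hBq : B q = -A p q • Pi.single r 1 := by
    simp [B, wedge_row, hrq.symm]
  have h := hM.wedge_single_row_mem hB (transpose_wedge _ _) (wedge_apply_self _ _ q) hpq
  rwa [hBq, wedge_smul_right, Submodule.smul_mem_iff _ (neg_ne_zero.2 hApq)] at h

lemma exists_wedge_single_mem (hM : IsCongruenceInvariant M) (hA : A ∈ M) (hskew : Aᵀ = -A)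
    (hdiag : ∀ i, A i i = 0) (hA0 : A ≠ 0) :
    ∃ a b : n, a ≠ b ∧ wedge (Pi.single a 1) (Pi.single b (1 : F)) ∈ M := by
  obtain ⟨p, q, hApq⟩ : ∃ p q, A p q ≠ 0 := by
    by_contra! h
    exact hA0 (Matrix.ext h)
  have hpq : p ≠ q := by rintro rfl; exact hApq (hdiag p)
  by_cases h : ∀ r, r = p ∨ r = q
  · refine ⟨p, q, hpq, ?_⟩
    rwa [eq_smul_wedge_of_forall_eq_or_eq hskew hdiag hpq h,
      Submodule.smul_mem_iff _ hApq] at hA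
  · push Not at h
    obtain ⟨r, hrp, hrq⟩ := h
    exact ⟨p, r, hrp.symm, hM.wedge_single_mem_of_ne hA hskew hdiag hApq hrp hrq⟩

end Field

end IsCongruenceInvariant

lemma mem_of_forall_wedge_single_mem {R : Type*} [CommRing R] {n : Type*} [Fintype n]
    [LinearOrder n] {M : Submodule R (Matrix n n R)}
    (hM : ∀ c d : n, wedge (Pi.single c 1) (Pi.single d (1 : R)) ∈ M) {A : Matrix n n R}
    (hskew : Aᵀ = -A) (hdiag : ∀ i, A i i = 0) : A ∈ M := by
  obtain ⟨U, rfl⟩ := exists_eq_sub_transpose_of_alternating hskew hdiag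
  rw [sub_transpose_eq_sum_wedge]
  exact M.sum_mem fun c _ => M.sum_mem fun d _ => M.smul_mem _ (hM c d)

open MatrixGroups in
theorem alternating_matrices_irreducible_under_congruence_general
    {F : Type*} [Field F] (m : ℕ)
    (M : Submodule F (Matrix (Fin m) (Fin m) F))
    (hMA : M ≤ altMat F m)
    (hinv : ∀ X : GL (Fin m) F, ∀ A ∈ M,
      (X : Matrix (Fin m) (Fin m) F) * A * (X : Matrix (Fin m) (Fin m) F)ᵀ ∈ M) :
    M = ⊥ ∨ M = altMat F m := by
  have hM : IsCongruenceInvariant M := hinv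
  refine or_iff_not_imp_left.2 fun hbot => le_antisymm hMA fun B hB => ?_
  obtain ⟨A, hA, hA0⟩ := (Submodule.ne_bot_iff M).1 hbot
  obtain ⟨a, b, hab, hwedge⟩ := hM.exists_wedge_single_mem hA (hMA hA).1 (hMA hA).2 hA0
  exact mem_of_forall_wedge_single_mem (hM.wedge_single_mem hab hwedge) hB.1 hB.2

open MatrixGroups in
theorem alternating_matrices_irreducible_under_congruence
    {F : Type*} [Field F] (m : ℕ) (hm : 2 ≤ m)
    (M : Submodule F (Matrix (Fin m) (Fin m) F))
    (hMA : M ≤ altMat F m)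
    (hinv : ∀ X : GL (Fin m) F, ∀ A ∈ M,
      (X : Matrix (Fin m) (Fin m) F) * A * (X : Matrix (Fin m) (Fin m) F)ᵀ ∈ M) :
    M = ⊥ ∨ M = altMat F m :=
  alternating_matrices_irreducible_under_congruence_general m M hMA hinv
end

section
/- Let m ≥ 2 and let F be a field of characteristic 2. Under the congruence action X·A = XAX' of GL_m(F), the quotient S_m(F)/A_m(F) of symmetric matrices modulo alternating matrices is an irreducible GL_m(F)-module. -/
/-!
In characteristic 2 a matrix is alternating exactly when it is symmetric with zero diagonal, so
modulo `altMat F m` every symmetric matrix agrees with its diagonal part. If `N` contains a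
symmetric matrix with a nonzero diagonal entry `dᵢ`, it therefore contains the diagonal matrix
`D = diagonal d`, and congruence by the transvection `1 + E_{ji}` gives
`D + dᵢ (E_{ij} + E_{ji}) + dᵢ E_{jj}`, whence `E_{jj} ∈ N` up to scaling for any
`j ≠ i` (one exists as `m ≥ 2`). The same step applied to `E_{jj}` gives every other `E_{kk}`,
so `N` contains all diagonal matrices and hence every symmetric matrix.
-/

open Matrix

namespace Matrix

variable {n R : Type*} [Fintype n] [DecidableEq n]

theorem single_mul_diagonal [Semiring R] (i j : n) (c : R) (d : n → R) :
    single i j c * diagonal d = single i j (c * d j) := by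
  ext a b
  by_cases h : i = a ∧ j = b
  · obtain ⟨rfl, rfl⟩ := h; simp
  · simp [single, h]

theorem diagonal_mul_single [Semiring R] (i j : n) (c : R) (d : n → R) :
    diagonal d * single i j c = single i j (d i * c) := by
  ext a b
  by_cases h : i = a ∧ j = b
  · obtain ⟨rfl, rfl⟩ := h; simp
  · simp [single, h]

theorem transvection_mul_diagonal_mul_transpose [CommRing R] (i j : n) (d : n → R) :
    transvection j i 1 * diagonal d * (transvection j i 1)ᵀ
      = diagonal d + (single i j (d i) + single j i (d i)) + single j j (d i) := by
  simp only [transvection, transpose_add, transpose_one, transpose_single, add_mul, mul_add,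
    one_mul, mul_one, single_mul_diagonal, diagonal_mul_single, single_mul_single_same]
  abel

end Matrix

section CharTwo

variable {F : Type*} [Field F] [CharP F 2] {m : ℕ} {N : Submodule F (Matrix (Fin m) (Fin m) F)}

theorem mem_altMat_iff {A : Matrix (Fin m) (Fin m) F} :
    A ∈ altMat F m ↔ A ∈ symMat F m ∧ ∀ i, A i i = 0 := by
  have hneg : -A = A := by rw [← neg_one_smul F A, CharTwo.neg_eq, one_smul]
  exact and_congr_left' (by rw [hneg]; rfl)

theorem single_add_single_mem_altMat {i j : Fin m} (hij : i ≠ j) (c : F) :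
    single i j c + single j i c ∈ altMat F m := by
  refine mem_altMat_iff.2 ⟨?_, congr_fun (?_ : diag (single i j c + single j i c) = 0)⟩
  · change _ = _
    rw [transpose_add, transpose_single, transpose_single, add_comm]
  · simp [hij, hij.symm]

theorem sub_diagonal_diag_mem_altMat {S : Matrix (Fin m) (Fin m) F} (hS : S ∈ symMat F m) :
    S - diagonal S.diag ∈ altMat F m :=
  mem_altMat_iff.2 ⟨(symMat F m).sub_mem hS (diagonal_transpose _), fun k => by simp⟩

theorem exists_diag_ne_zero_of_notMem_altMat {S : Matrix (Fin m) (Fin m) F}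
    (hS : S ∈ symMat F m) (hSA : S ∉ altMat F m) : ∃ i, S i i ≠ 0 := by
  by_contra! h
  exact hSA (mem_altMat_iff.2 ⟨hS, h⟩)

theorem diagonal_diag_mem_iff (hAN : altMat F m ≤ N) {S : Matrix (Fin m) (Fin m) F}
    (hS : S ∈ symMat F m) : diagonal S.diag ∈ N ↔ S ∈ N := by
  have hSD := hAN (sub_diagonal_diag_mem_altMat hS)
  exact ⟨fun hD => by simpa using N.add_mem hSD hD, fun hSN => by simpa using N.sub_mem hSN hSD⟩

theorem symMat_le_of_forall_single_mem (hAN : altMat F m ≤ N)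
    (h : ∀ k c, single k k c ∈ N) : symMat F m ≤ N := fun S hS => by
  rw [← diagonal_diag_mem_iff hAN hS, ← sum_single_eq_diagonal]
  exact N.sum_mem fun k _ => h k _

theorem single_mem_of_diagonal_mem (hAN : altMat F m ≤ N)
    (hinv : ∀ X : GL (Fin m) F, ∀ A ∈ N,
      (X : Matrix (Fin m) (Fin m) F) * A * (X : Matrix (Fin m) (Fin m) F)ᵀ ∈ N)
    {d : Fin m → F} (hd : diagonal d ∈ N) {i j : Fin m} (hij : i ≠ j) :
    single j j (d i) ∈ N := by
  have hdet : (transvection j i (1 : F)).det ≠ 0 := by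
    rw [det_transvection_of_ne _ _ hij.symm]
    exact one_ne_zero
  have hX : transvection j i 1 * diagonal d * (transvection j i 1)ᵀ ∈ N :=
    hinv (GeneralLinearGroup.mkOfDetNeZero _ hdet) _ hd
  rw [transvection_mul_diagonal_mul_transpose] at hX
  exact (N.add_mem_iff_right (N.add_mem hd (hAN (single_add_single_mem_altMat hij _)))).1 hX

theorem forall_single_mem_of_diagonal_mem (hm : 2 ≤ m) (hAN : altMat F m ≤ N)
    (hinv : ∀ X : GL (Fin m) F, ∀ A ∈ N,
      (X : Matrix (Fin m) (Fin m) F) * A * (X : Matrix (Fin m) (Fin m) F)ᵀ ∈ N)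
    {d : Fin m → F} (hd : diagonal d ∈ N) {i : Fin m} (hi : d i ≠ 0) (k : Fin m) (c : F) :
    single k k c ∈ N := by
  have : Nontrivial (Fin m) := Fin.nontrivial_iff_two_le.2 hm
  obtain ⟨j, hji⟩ := exists_ne i
  have hj : single j j (d i) ∈ N := single_mem_of_diagonal_mem hAN hinv hd hji.symm
  have hk : single k k (d i) ∈ N := by
    rcases eq_or_ne j k with rfl | hjk
    · exact hj
    · rw [← diagonal_single] at hj
      simpa using single_mem_of_diagonal_mem hAN hinv hj hjk
  simpa [smul_single, hi] using N.smul_mem (c / d i) hk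

end CharTwo

open MatrixGroups in
theorem sym_mod_alt_irreducible_under_congruence_char_two
    {F : Type*} [Field F] [CharP F 2] (m : ℕ) (hm : 2 ≤ m)
    (N : Submodule F (Matrix (Fin m) (Fin m) F))
    (hAN : altMat F m ≤ N) (hNS : N ≤ symMat F m)
    (hinv : ∀ X : GL (Fin m) F, ∀ A ∈ N,
      (X : Matrix (Fin m) (Fin m) F) * A * (X : Matrix (Fin m) (Fin m) F)ᵀ ∈ N) :
    N = altMat F m ∨ N = symMat F m := by
  by_cases hle : N ≤ altMat F m
  · exact Or.inl (le_antisymm hle hAN)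
  obtain ⟨A, hA, hAalt⟩ := SetLike.not_le_iff_exists.1 hle
  obtain ⟨i, hi⟩ := exists_diag_ne_zero_of_notMem_altMat (hNS hA) hAalt
  have hD : diagonal A.diag ∈ N := (diagonal_diag_mem_iff hAN (hNS hA)).2 hA
  exact Or.inr <| le_antisymm hNS <| symMat_le_of_forall_single_mem hAN
    (forall_single_mem_of_diagonal_mem hm hAN hinv hD hi)
end

section
/- Let (V,φ) be a finite-dimensional bilinear space with isometry group G, and let V_∞ ⊆ ⁿ∞V be the canonical G-invariant subspaces (V_∞ = L_∞(V)+R_∞(V) and ⁿ∞V = L^∞(V)+R^∞(V), where ⁿ∞V = L(V_∞)). Let K = G[V_∞] ∩ G[ⁿ∞V/V_∞] be the subgroup of isometries fixing V_∞ pointwise and acting trivially on ⁿ∞V/V_∞. Then for any g, h, k ∈ K one has (k−1)(h−1)(g−1) = 0 as endomorphisms of V; in particular every element of K is unipotent and K is nilpotent of class at most 2. -/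
variable {F V : Type*} [Field F] [AddCommGroup V] [Module F V]

open scoped commutatorElement

/-! An isometry `g` fixing `W = V_∞` pointwise moves every vector into `L(W)`, because
`φ (g v - v) w = φ (g v) (g w) - φ v w = 0` for `w ∈ W`. Hence every element of `K` is
unitriangular for the flag `0 ⊆ W ⊆ L(W) ⊆ V`: `g - 1` maps `V` into `L(W)`, `L(W)` into `W`
and kills `W`. Three such maps `g - 1` compose to zero, and the commutator of two such
automorphisms acts trivially on `L(W)` and on `V / W`, which makes it commute with a third. -/

section Unitriangular

variable {R M : Type*} [Ring R] [AddCommGroup M] [Module R M]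

structure IsUnitriangular (U W : Submodule R M) (g : M ≃ₗ[R] M) : Prop where
  sub_mem : ∀ v, g v - v ∈ U
  sub_mem_of_mem : ∀ u ∈ U, g u - u ∈ W
  apply_of_mem : ∀ w ∈ W, g w = w

theorem LinearEquiv.commute_of_forall_sub_mem {U W : Submodule R M} {c k : M ≃ₗ[R] M}
    (hc_fix : ∀ u ∈ U, c u = u) (hc : ∀ v, c v - v ∈ W)
    (hk_fix : ∀ w ∈ W, k w = w) (hk : ∀ v, k v - v ∈ U) : Commute c k := by
  refine LinearEquiv.ext fun v => ?_
  have hck : c (k v) = c v + (k v - v) := by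
    rw [← hc_fix _ (hk v), ← map_add, add_sub_cancel]
  have hkc : k (c v) = k v + (c v - v) := by
    rw [← hk_fix _ (hc v), ← map_add, add_sub_cancel]
  rw [LinearEquiv.mul_apply, LinearEquiv.mul_apply, hck, hkc]
  abel

namespace IsUnitriangular

variable {U W : Submodule R M} {g h k : M ≃ₗ[R] M}

theorem apply_mem (hg : IsUnitriangular U W g) {u : M} (hu : u ∈ U) : g u ∈ U := by
  simpa using add_mem (hg.sub_mem u) hu

theorem inv (hg : IsUnitriangular U W g) : IsUnitriangular U W g⁻¹ := by
  have hsub : ∀ v, g⁻¹ v - v ∈ U := fun v => by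
    simpa using neg_mem (hg.sub_mem (g⁻¹ v))
  refine ⟨hsub, fun u hu => ?_, fun w hw => ?_⟩
  · have hu' : g⁻¹ u ∈ U := by simpa using add_mem (hsub u) hu
    simpa using neg_mem (hg.sub_mem_of_mem _ hu')
  · exact g.symm_apply_eq.mpr (hg.apply_of_mem w hw).symm

theorem comp_sub_one_eq_zero (hg : IsUnitriangular U W g) (hh : IsUnitriangular U W h)
    (hk : IsUnitriangular U W k) :
    (k.toLinearMap - LinearMap.id) ∘ₗ (h.toLinearMap - LinearMap.id) ∘ₗ
      (g.toLinearMap - LinearMap.id) = 0 := by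
  ext v
  simpa [sub_eq_zero] using hk.apply_of_mem _ (hh.sub_mem_of_mem _ (hg.sub_mem v))

theorem apply_apply_comm_of_mem (hg : IsUnitriangular U W g) (hh : IsUnitriangular U W h)
    {u : M} (hu : u ∈ U) : g (h u) = h (g u) := by
  have hgh : g (h u) = g u + (h u - u) := by
    rw [← hg.apply_of_mem _ (hh.sub_mem_of_mem u hu), ← map_add, add_sub_cancel]
  have hhg : h (g u) = h u + (g u - u) := by
    rw [← hh.apply_of_mem _ (hg.sub_mem_of_mem u hu), ← map_add, add_sub_cancel]
  rw [hgh, hhg]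
  abel

theorem apply_apply_sub_apply_apply_mem (hg : IsUnitriangular U W g)
    (hh : IsUnitriangular U W h) (v : M) : g (h v) - h (g v) ∈ W := by
  have key : g (h v) - h (g v) = (g (h v - v) - (h v - v)) - (h (g v - v) - (g v - v)) := by
    simp only [map_sub]
    abel
  rw [key]
  exact W.sub_mem (hg.sub_mem_of_mem _ (hh.sub_mem v)) (hh.sub_mem_of_mem _ (hg.sub_mem v))

theorem commutatorElement_apply_of_mem (hg : IsUnitriangular U W g)
    (hh : IsUnitriangular U W h) {u : M} (hu : u ∈ U) : ⁅g, h⁆ u = u := by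
  have hu' : g⁻¹ (h⁻¹ u) ∈ U := hg.inv.apply_mem (hh.inv.apply_mem hu)
  simp only [commutatorElement_def, LinearEquiv.mul_apply, hg.apply_apply_comm_of_mem hh hu']
  simp

theorem commutatorElement_sub_mem (hg : IsUnitriangular U W g) (hh : IsUnitriangular U W h)
    (v : M) : ⁅g, h⁆ v - v ∈ W := by
  simpa [commutatorElement_def] using hg.apply_apply_sub_apply_apply_mem hh (g⁻¹ (h⁻¹ v))

theorem commute_commutatorElement (hg : IsUnitriangular U W g) (hh : IsUnitriangular U W h)
    (hk : IsUnitriangular U W k) : Commute ⁅g, h⁆ k :=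
  LinearEquiv.commute_of_forall_sub_mem (fun _ hu => hg.commutatorElement_apply_of_mem hh hu)
    (hg.commutatorElement_sub_mem hh) hk.apply_of_mem hk.sub_mem

end IsUnitriangular

end Unitriangular

theorem IsIsom.sub_mem_Lc {φ : V →ₗ[F] V →ₗ[F] F} {g : V ≃ₗ[F] V} (hg : IsIsom φ g)
    {W : Submodule F V} (hfix : ∀ w ∈ W, g w = w) (v : V) : g v - v ∈ Lc φ W := by
  intro w hw
  have hgw := hg v w
  rw [hfix w hw] at hgw
  rw [map_sub, LinearMap.sub_apply, hgw, sub_self]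

theorem IsIsom.isUnitriangular {φ : V →ₗ[F] V →ₗ[F] F} {g : V ≃ₗ[F] V} (hg : IsIsom φ g)
    {W : Submodule F V} (hfix : ∀ w ∈ W, g w = w) (hsub : ∀ v ∈ Lc φ W, g v - v ∈ W) :
    IsUnitriangular (Lc φ W) W g :=
  ⟨hg.sub_mem_Lc hfix, hsub, hfix⟩

theorem stabilizer_K_is_two_step_nilpotent_general
    (φ : V →ₗ[F] V →ₗ[F] F) :
    (∀ g h k : V ≃ₗ[F] V,
      (IsIsom φ g ∧ (∀ v ∈ Vinf φ, g v = v) ∧ ∀ v ∈ Lc φ (Vinf φ), g v - v ∈ Vinf φ) →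
      (IsIsom φ h ∧ (∀ v ∈ Vinf φ, h v = v) ∧ ∀ v ∈ Lc φ (Vinf φ), h v - v ∈ Vinf φ) →
      (IsIsom φ k ∧ (∀ v ∈ Vinf φ, k v = v) ∧ ∀ v ∈ Lc φ (Vinf φ), k v - v ∈ Vinf φ) →
      (k.toLinearMap - LinearMap.id) ∘ₗ (h.toLinearMap - LinearMap.id) ∘ₗ
        (g.toLinearMap - LinearMap.id) = 0) ∧
    (∀ g : V ≃ₗ[F] V,
      (IsIsom φ g ∧ (∀ v ∈ Vinf φ, g v = v) ∧ ∀ v ∈ Lc φ (Vinf φ), g v - v ∈ Vinf φ) →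
      (g.toLinearMap - LinearMap.id) ^ 3 = 0) ∧
    (∀ g h k : V ≃ₗ[F] V,
      (IsIsom φ g ∧ (∀ v ∈ Vinf φ, g v = v) ∧ ∀ v ∈ Lc φ (Vinf φ), g v - v ∈ Vinf φ) →
      (IsIsom φ h ∧ (∀ v ∈ Vinf φ, h v = v) ∧ ∀ v ∈ Lc φ (Vinf φ), h v - v ∈ Vinf φ) →
      (IsIsom φ k ∧ (∀ v ∈ Vinf φ, k v = v) ∧ ∀ v ∈ Lc φ (Vinf φ), k v - v ∈ Vinf φ) →
      ⁅⁅g, h⁆, k⁆ = 1) := by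
  have hK : ∀ g : V ≃ₗ[F] V,
      (IsIsom φ g ∧ (∀ v ∈ Vinf φ, g v = v) ∧ ∀ v ∈ Lc φ (Vinf φ), g v - v ∈ Vinf φ) →
      IsUnitriangular (Lc φ (Vinf φ)) (Vinf φ) g :=
    fun _ ⟨hiso, hfix, hsub⟩ => hiso.isUnitriangular hfix hsub
  refine ⟨fun g h k hg hh hk => ?_, fun g hg => ?_, fun g h k hg hh hk => ?_⟩
  · exact (hK g hg).comp_sub_one_eq_zero (hK h hh) (hK k hk)
  · rw [pow_three]
    exact (hK g hg).comp_sub_one_eq_zero (hK g hg) (hK g hg)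
  · exact commutatorElement_eq_one_iff_commute.mpr
      ((hK g hg).commute_commutatorElement (hK h hh) (hK k hk))

theorem stabilizer_K_is_two_step_nilpotent
    [FiniteDimensional F V] (φ : V →ₗ[F] V →ₗ[F] F) :
    (∀ g h k : V ≃ₗ[F] V,
      (IsIsom φ g ∧ (∀ v ∈ Vinf φ, g v = v) ∧ ∀ v ∈ Lc φ (Vinf φ), g v - v ∈ Vinf φ) →
      (IsIsom φ h ∧ (∀ v ∈ Vinf φ, h v = v) ∧ ∀ v ∈ Lc φ (Vinf φ), h v - v ∈ Vinf φ) →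
      (IsIsom φ k ∧ (∀ v ∈ Vinf φ, k v = v) ∧ ∀ v ∈ Lc φ (Vinf φ), k v - v ∈ Vinf φ) →
      (k.toLinearMap - LinearMap.id) ∘ₗ (h.toLinearMap - LinearMap.id) ∘ₗ
        (g.toLinearMap - LinearMap.id) = 0) ∧
    (∀ g : V ≃ₗ[F] V,
      (IsIsom φ g ∧ (∀ v ∈ Vinf φ, g v = v) ∧ ∀ v ∈ Lc φ (Vinf φ), g v - v ∈ Vinf φ) →
      (g.toLinearMap - LinearMap.id) ^ 3 = 0) ∧
    (∀ g h k : V ≃ₗ[F] V,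
      (IsIsom φ g ∧ (∀ v ∈ Vinf φ, g v = v) ∧ ∀ v ∈ Lc φ (Vinf φ), g v - v ∈ Vinf φ) →
      (IsIsom φ h ∧ (∀ v ∈ Vinf φ, h v = v) ∧ ∀ v ∈ Lc φ (Vinf φ), h v - v ∈ Vinf φ) →
      (IsIsom φ k ∧ (∀ v ∈ Vinf φ, k v = v) ∧ ∀ v ∈ Lc φ (Vinf φ), k v - v ∈ Vinf φ) →
      ⁅⁅g, h⁆, k⁆ = 1) :=
  stabilizer_K_is_two_step_nilpotent_general φ
end

section
/- Let (V,φ) be a finite-dimensional bilinear space with isometry group G and canonical G-invariant subspace V_∞. Then the set G[V_∞] ∩ G[V/V_∞] of isometries fixing V_∞ pointwise and acting trivially on V/V_∞ is an abelian normal subgroup of G, and for any two of its elements g, h one has (h−1)(g−1) = 0; consequently gh = g + h − 1 and every element of this subgroup is unipotent. -/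
/-!
If `a` fixes `V_∞` pointwise and `(b - 1) V ⊆ V_∞`, then `(a - 1)(b - 1) = 0`, since `a` fixes
`(b - 1) v ∈ V_∞`; the product formula, commutativity and `(g - 1)² = 0` are this identity
expanded. For normality, an isometry `k` satisfies `k (L U) = L (k U)` and `k (R U) = R (k U)`,
so it maps every iterate `L^{2k+1}(V)`, `R^{2k+1}(V)`, hence `V_∞`, onto itself; conjugating by
`k` therefore preserves both conditions.
-/

variable {F V : Type*} [Field F] [AddCommGroup V] [Module F V]

section FixedAndTrivialOnQuotient

variable {R M : Type*} [Ring R] [AddCommGroup M] [Module R M] {U : Submodule R M}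

lemma apply_apply_eq_of_fixes_of_sub_mem {a b : M →ₗ[R] M} (ha : ∀ v ∈ U, a v = v)
    (hb : ∀ v, b v - v ∈ U) (v : M) : a (b v) = a v + b v - v := by
  have hfix := ha _ (hb v)
  rw [map_sub] at hfix
  rw [sub_eq_iff_eq_add.mp hfix]
  abel

lemma sub_id_comp_sub_id_eq_zero {a b : M →ₗ[R] M} (ha : ∀ v ∈ U, a v = v)
    (hb : ∀ v, b v - v ∈ U) : (a - LinearMap.id) ∘ₗ (b - LinearMap.id) = 0 := by
  ext v
  simp only [LinearMap.comp_apply, LinearMap.sub_apply, LinearMap.id_apply, map_sub,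
    apply_apply_eq_of_fixes_of_sub_mem ha hb, LinearMap.zero_apply]
  abel

lemma comp_eq_add_sub_id {a b : M →ₗ[R] M} (ha : ∀ v ∈ U, a v = v)
    (hb : ∀ v, b v - v ∈ U) : a ∘ₗ b = a + b - LinearMap.id := by
  ext v
  exact apply_apply_eq_of_fixes_of_sub_mem ha hb v

lemma conj_apply_eq_self_of_mem {k g : M ≃ₗ[R] M} (hk : U ≤ U.map (k : M →ₗ[R] M))
    (hg : ∀ v ∈ U, g v = v) : ∀ v ∈ U, (k * g * k⁻¹) v = v := by
  intro v hv
  have hkv : k.symm v ∈ U := (Submodule.mem_map_equiv _).mp (hk hv)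
  simp [hg _ hkv]

lemma conj_apply_sub_self_mem {k g : M ≃ₗ[R] M} (hk : U.map (k : M →ₗ[R] M) ≤ U)
    (hg : ∀ v, g v - v ∈ U) : ∀ v, (k * g * k⁻¹) v - v ∈ U := by
  intro v
  simpa using hk (Submodule.mem_map_of_mem (f := (k : M →ₗ[R] M)) (hg (k⁻¹ v)))

end FixedAndTrivialOnQuotient

section

variable {φ : V →ₗ[F] V →ₗ[F] F} {g k : V ≃ₗ[F] V}

namespace IsIsom

lemma inv (hk : IsIsom φ k) : IsIsom φ k⁻¹ := by
  intro v w
  simpa using (hk (k⁻¹ v) (k⁻¹ w)).symm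

lemma mul (hk : IsIsom φ k) (hg : IsIsom φ g) : IsIsom φ (k * g) := by
  intro v w
  simp [hk _ _, hg v w]

lemma map_Lc (hk : IsIsom φ k) (U : Submodule F V) :
    (Lc φ U).map (k : V →ₗ[F] V) = Lc φ (U.map (k : V →ₗ[F] V)) := by
  ext v
  have hφ : ∀ u, φ v (k u) = φ (k.symm v) u := fun u => by simpa using hk (k.symm v) u
  rw [Submodule.mem_map_equiv]
  constructor
  · rintro hv _ ⟨u, hu, rfl⟩
    exact (hφ u).trans (hv u hu)
  · intro hv u hu
    rw [← hφ]
    exact hv _ (Submodule.mem_map_of_mem hu)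

lemma map_Rc (hk : IsIsom φ k) (U : Submodule F V) :
    (Rc φ U).map (k : V →ₗ[F] V) = Rc φ (U.map (k : V →ₗ[F] V)) := by
  ext v
  have hφ : ∀ u, φ (k u) v = φ u (k.symm v) := fun u => by simpa using hk u (k.symm v)
  rw [Submodule.mem_map_equiv]
  constructor
  · rintro hv _ ⟨u, hu, rfl⟩
    exact (hφ u).trans (hv u hu)
  · intro hv u hu
    rw [← hφ]
    exact hv _ (Submodule.mem_map_of_mem hu)

lemma map_Lodd (hk : IsIsom φ k) (n : ℕ) : (Lodd φ n).map (k : V →ₗ[F] V) = Lodd φ n := by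
  induction n with
  | zero => simp [Lodd, hk.map_Lc]
  | succ n ih => simp only [Lodd, hk.map_Lc, hk.map_Rc, ih]

lemma map_Rodd (hk : IsIsom φ k) (n : ℕ) : (Rodd φ n).map (k : V →ₗ[F] V) = Rodd φ n := by
  induction n with
  | zero => simp [Rodd, hk.map_Rc]
  | succ n ih => simp only [Rodd, hk.map_Lc, hk.map_Rc, ih]

lemma map_Vinf (hk : IsIsom φ k) : (Vinf φ).map (k : V →ₗ[F] V) = Vinf φ := by
  simp only [Vinf, Submodule.map_sup, Submodule.map_iSup, hk.map_Lodd, hk.map_Rodd]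

end IsIsom

end

theorem stabilizer_of_Vinf_and_quotient_is_abelian_unipotent_general
    (φ : V →ₗ[F] V →ₗ[F] F) :
    (∀ g h : V ≃ₗ[F] V,
      (IsIsom φ g ∧ (∀ v ∈ Vinf φ, g v = v) ∧ ∀ v : V, g v - v ∈ Vinf φ) →
      (IsIsom φ h ∧ (∀ v ∈ Vinf φ, h v = v) ∧ ∀ v : V, h v - v ∈ Vinf φ) →
      (h.toLinearMap - LinearMap.id) ∘ₗ (g.toLinearMap - LinearMap.id) = 0 ∧
      (g * h).toLinearMap = g.toLinearMap + h.toLinearMap - LinearMap.id ∧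
      g * h = h * g) ∧
    (∀ g k : V ≃ₗ[F] V,
      (IsIsom φ g ∧ (∀ v ∈ Vinf φ, g v = v) ∧ ∀ v : V, g v - v ∈ Vinf φ) →
      IsIsom φ k →
      (IsIsom φ (k * g * k⁻¹) ∧ (∀ v ∈ Vinf φ, (k * g * k⁻¹) v = v) ∧
        ∀ v : V, (k * g * k⁻¹) v - v ∈ Vinf φ)) ∧
    (∀ g : V ≃ₗ[F] V,
      (IsIsom φ g ∧ (∀ v ∈ Vinf φ, g v = v) ∧ ∀ v : V, g v - v ∈ Vinf φ) →
      (g.toLinearMap - LinearMap.id) ^ 2 = 0) := by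
  refine ⟨?_, ?_, ?_⟩
  · rintro g h ⟨-, hg_fix, hg_quot⟩ ⟨-, hh_fix, hh_quot⟩
    have hgh := comp_eq_add_sub_id (a := g.toLinearMap) hg_fix hh_quot
    have hhg := comp_eq_add_sub_id (a := h.toLinearMap) hh_fix hg_quot
    refine ⟨sub_id_comp_sub_id_eq_zero hh_fix hg_quot, hgh, ?_⟩
    apply LinearEquiv.toLinearMap_injective
    rw [LinearEquiv.coe_toLinearMap_mul, LinearEquiv.coe_toLinearMap_mul, Module.End.mul_eq_comp,
      Module.End.mul_eq_comp, hgh, hhg, add_comm (g : V →ₗ[F] V)]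
  · rintro g k ⟨hg_isom, hg_fix, hg_quot⟩ hk
    exact ⟨(hk.mul hg_isom).mul hk.inv, conj_apply_eq_self_of_mem hk.map_Vinf.ge hg_fix,
      conj_apply_sub_self_mem hk.map_Vinf.le hg_quot⟩
  · rintro g ⟨-, hg_fix, hg_quot⟩
    rw [pow_two, Module.End.mul_eq_comp]
    exact sub_id_comp_sub_id_eq_zero hg_fix hg_quot

theorem stabilizer_of_Vinf_and_quotient_is_abelian_unipotent
    [FiniteDimensional F V] (φ : V →ₗ[F] V →ₗ[F] F) :
    (∀ g h : V ≃ₗ[F] V,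
      (IsIsom φ g ∧ (∀ v ∈ Vinf φ, g v = v) ∧ ∀ v : V, g v - v ∈ Vinf φ) →
      (IsIsom φ h ∧ (∀ v ∈ Vinf φ, h v = v) ∧ ∀ v : V, h v - v ∈ Vinf φ) →
      (h.toLinearMap - LinearMap.id) ∘ₗ (g.toLinearMap - LinearMap.id) = 0 ∧
      (g * h).toLinearMap = g.toLinearMap + h.toLinearMap - LinearMap.id ∧
      g * h = h * g) ∧
    (∀ g k : V ≃ₗ[F] V,
      (IsIsom φ g ∧ (∀ v ∈ Vinf φ, g v = v) ∧ ∀ v : V, g v - v ∈ Vinf φ) →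
      IsIsom φ k →
      (IsIsom φ (k * g * k⁻¹) ∧ (∀ v ∈ Vinf φ, (k * g * k⁻¹) v = v) ∧
        ∀ v : V, (k * g * k⁻¹) v - v ∈ Vinf φ)) ∧
    (∀ g : V ≃ₗ[F] V,
      (IsIsom φ g ∧ (∀ v ∈ Vinf φ, g v = v) ∧ ∀ v : V, g v - v ∈ Vinf φ) →
      (g.toLinearMap - LinearMap.id) ^ 2 = 0) :=
  stabilizer_of_Vinf_and_quotient_is_abelian_unipotent_general φ
end
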